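/- arXiv:2401.11111 — 6 statements merged into one kernel-verified Lean document; each statement's English description precedes it below -/
import Mathlib

section
/- Let N ≥ 5 be an integer, and let S_k = Σ_{j=2}^{k} 1/(2 sin((j-1)π/k))^{N-2}. Then lim_{k→∞} S_k / k^{N-2} = (2/(2π)^{N-2}) · Σ_{j=1}^{∞} 1/j^{N-2}. -/
open Real Finset Filter

private lemma aux_lim (c : ℝ) (hc : 0 < c) :
    Tendsto (fun k : ℕ => (k : ℝ) * Real.sin (c / k)) atTop (nhds c) := by
  have hslope : Tendsto (fun x : ℝ => Real.sin x / x) (nhdsWithin 0 {(0:ℝ)}ᶜ) (nhds 1) := by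
    have h := Real.hasDerivAt_sin 0
    rw [Real.cos_zero] at h
    have h2 := hasDerivAt_iff_tendsto_slope.mp h
    refine h2.congr (fun x => ?_)
    simp [slope_def_field]
  have h2 : Tendsto (fun k : ℕ => c / (k : ℝ)) atTop (nhdsWithin 0 {(0:ℝ)}ᶜ) := by
    rw [tendsto_nhdsWithin_iff]
    refine ⟨tendsto_const_div_atTop_nhds_zero_nat c, ?_⟩
    filter_upwards [Filter.eventually_ge_atTop 1] with k hk
    have hk0 : (k : ℝ) ≠ 0 := by positivity
    simp only [Set.mem_compl_iff, Set.mem_singleton_iff]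
    exact div_ne_zero hc.ne' hk0
  have hmul : Tendsto (fun k : ℕ => c * (Real.sin (c / k) / (c / k))) atTop (nhds (c * 1)) :=
    (hslope.comp h2).const_mul c
  rw [mul_one] at hmul
  refine hmul.congr' ?_
  filter_upwards [Filter.eventually_ge_atTop 1] with k hk
  have hk0 : (k : ℝ) ≠ 0 := by positivity
  field_simp

private lemma aux_lim2 (n : ℕ) (c : ℝ) (hc : 0 < c) :
    Tendsto (fun k : ℕ => 1 / (2 * ((k : ℝ) * Real.sin (c / k))) ^ n) atTop
      (nhds (1 / (2 * c) ^ n)) := by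
  have h := (((aux_lim c hc).const_mul 2).pow n).inv₀ (by positivity)
  simpa only [one_div] using h

private lemma aux_bound (n k j : ℕ) (h1 : 1 ≤ j) (h2 : 2 * j ≤ k) :
    |1 / (2 * ((k : ℝ) * Real.sin ((j : ℝ) * Real.pi / k))) ^ n| ≤ 1 / (4 * (j : ℝ)) ^ n := by
  have hπ := Real.pi_pos
  have hk : 0 < k := by omega
  have hk0 : (0:ℝ) < k := by exact_mod_cast hk
  have hj0 : (0:ℝ) < j := by exact_mod_cast h1
  have h2' : 2 * (j:ℝ) ≤ k := by exact_mod_cast h2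
  have hx0 : (0:ℝ) ≤ (j : ℝ) * Real.pi / k := by positivity
  have hx1 : (j : ℝ) * Real.pi / k ≤ Real.pi / 2 := by
    rw [div_le_div_iff₀ hk0 two_pos]
    nlinarith
  have hsin : 2 / Real.pi * ((j : ℝ) * Real.pi / k) ≤ Real.sin ((j : ℝ) * Real.pi / k) :=
    Real.mul_le_sin hx0 hx1
  have hsimp : 2 / Real.pi * ((j : ℝ) * Real.pi / k) = 2 * j / k := by
    field_simp
  rw [hsimp] at hsin
  have key : (4 * (j:ℝ)) ≤ 2 * ((k : ℝ) * Real.sin ((j : ℝ) * Real.pi / k)) := by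
    rw [div_le_iff₀ hk0] at hsin
    nlinarith
  have hpos : (0:ℝ) < 4 * (j:ℝ) := by positivity
  have hpos2 : (0:ℝ) < 2 * ((k : ℝ) * Real.sin ((j : ℝ) * Real.pi / k)) := lt_of_lt_of_le hpos key
  rw [abs_of_nonneg (by positivity)]
  exact one_div_le_one_div_of_le (by positivity) (pow_le_pow_left₀ hpos.le key n)

set_option maxHeartbeats 1000000 in
/-- Asymptotics: `S_k / k^{N-2} → (2/(2π)^{N-2}) ∑_{j≥1} j^{-(N-2)}`. -/
theorem stmt_5 (N : ℕ) (hN : 5 ≤ N) :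
    Filter.Tendsto
      (fun k : ℕ =>
        (∑ j ∈ Finset.Icc 2 k, 1 / (2 * Real.sin (((j:ℝ)-1)*Real.pi/k)) ^ (N-2))
          / (k:ℝ) ^ (N-2))
      Filter.atTop
      (nhds ((2 / (2*Real.pi) ^ (N-2)) * ∑' j : ℕ, 1 / ((j:ℝ)+1) ^ (N-2))) := by
  set n := N - 2 with hndef
  have hn3 : 3 ≤ n := by omega
  have hπ := Real.pi_pos
  set u : ℕ → ℕ → ℝ := fun k j => 1 / (2 * ((k : ℝ) * Real.sin ((j : ℝ) * Real.pi / k))) ^ n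
    with hu
  set g : ℕ → ℝ := fun i => 1 / (2 * (((i + 1 : ℕ) : ℝ) * Real.pi)) ^ n with hg
  set bound : ℕ → ℝ := fun i => 1 / (4 * ((i + 1 : ℕ) : ℝ)) ^ n with hbound
  -- summability of the bound
  have hsummable : Summable bound := by
    have h1 : Summable (fun i : ℕ => 1 / ((i : ℝ)) ^ n) :=
      Real.summable_one_div_nat_pow.mpr (by omega)
    have h2 : Summable (fun i : ℕ => 1 / (((i + 1 : ℕ)) : ℝ) ^ n) :=
      (summable_nat_add_iff 1).mpr h1
    have h3 := h2.mul_left (1 / (4:ℝ) ^ n)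
    refine h3.congr (fun i => ?_)
    simp only [hbound, mul_pow, one_div_mul_one_div]
  -- the two families
  have tendsto_half : ∀ m : ℕ → ℕ, (∀ k, 2 * m k ≤ k) →
      (∀ i : ℕ, ∀ᶠ k in atTop, i + 1 ≤ m k) →
      Tendsto (fun k => ∑' i : ℕ, (if i + 1 ≤ m k then u k (i + 1) else 0)) atTop
        (nhds (∑' i, g i)) := by
    intro m hm hm2
    apply tendsto_tsum_of_dominated_convergence hsummable
    · intro i
      have hc : (0:ℝ) < ((i + 1 : ℕ) : ℝ) * Real.pi := by positivity
      have hlim := aux_lim2 n _ hc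
      refine hlim.congr' ?_
      filter_upwards [hm2 i] with k hk
      rw [if_pos hk]
    · filter_upwards with k
      intro i
      by_cases h : i + 1 ≤ m k
      · rw [if_pos h]
        have h2j : 2 * (i + 1) ≤ k := le_trans (by omega) (hm k)
        exact aux_bound n k (i + 1) (by omega) h2j
      · rw [if_neg h]
        simp only [norm_zero, hbound]
        positivity
  have hm1 : ∀ k : ℕ, 2 * (k / 2) ≤ k := fun k => by omega
  have hm2 : ∀ k : ℕ, 2 * ((k - 1) / 2) ≤ k := fun k => by omega
  have hev1 : ∀ i : ℕ, ∀ᶠ k in atTop, i + 1 ≤ k / 2 := fun i => by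
    filter_upwards [Filter.eventually_ge_atTop (2 * i + 2)] with k hk; omega
  have hev2 : ∀ i : ℕ, ∀ᶠ k in atTop, i + 1 ≤ (k - 1) / 2 := fun i => by
    filter_upwards [Filter.eventually_ge_atTop (2 * i + 3)] with k hk; omega
  have T1 := tendsto_half (fun k => k / 2) hm1 hev1
  have T2 := tendsto_half (fun k => (k - 1) / 2) hm2 hev2
  have Tsum := T1.add T2
  -- identify the limit
  have hlimit : (∑' i, g i) + (∑' i, g i)
      = (2 / (2 * Real.pi) ^ n) * ∑' j : ℕ, 1 / ((j : ℝ) + 1) ^ n := by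
    have hgi : ∀ i : ℕ, g i = (1 / (2 * Real.pi) ^ n) * (1 / ((i : ℝ) + 1) ^ n) := by
      intro i
      rw [hg, one_div_mul_one_div, ← mul_pow]

      push_cast
      ring
    rw [tsum_congr hgi, tsum_mul_left]
    ring
  rw [← hlimit]
  -- identify the function
  refine Tsum.congr' ?_
  filter_upwards [Filter.eventually_ge_atTop 2] with k hk
  have hk0 : (0:ℝ) < k := by exact_mod_cast (by omega : 0 < k)
  -- finite sum identities
  have hfin : ∀ m : ℕ, (∑' i : ℕ, (if i + 1 ≤ m then u k (i + 1) else 0))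
      = ∑ j ∈ Finset.Ioc 0 m, u k j := by
    intro m
    rw [tsum_eq_sum (s := Finset.range m) (by
      intro i hi
      rw [if_neg]
      simp only [Finset.mem_range, not_lt] at hi
      omega)]
    refine Finset.sum_nbij' (fun i => i + 1) (fun j => j - 1) ?_ ?_ ?_ ?_ ?_
    · intro a ha; simp only [Finset.mem_range] at ha; simp only [Finset.mem_Ioc]; omega
    · intro a ha; simp only [Finset.mem_Ioc] at ha; simp only [Finset.mem_range]; omega
    · intro a _; show a + 1 - 1 = a; omega
    · intro a ha; simp only [Finset.mem_Ioc] at ha; show a - 1 + 1 = a; omega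
    · intro a ha; simp only [Finset.mem_range] at ha
      rw [if_pos (by omega)]
  rw [hfin, hfin]
  -- reflection for the second sum
  have hrefl : (∑ j ∈ Finset.Ioc 0 ((k - 1) / 2), u k j)
      = ∑ j ∈ Finset.Ioc (k / 2) (k - 1), u k j := by
    refine Finset.sum_nbij' (fun j => k - j) (fun j => k - j) ?_ ?_ ?_ ?_ ?_
    · intro a ha; simp only [Finset.mem_Ioc] at ha ⊢; omega
    · intro a ha; simp only [Finset.mem_Ioc] at ha ⊢; omega
    · intro a ha; simp only [Finset.mem_Ioc] at ha; show k - (k - a) = a; omega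
    · intro a ha; simp only [Finset.mem_Ioc] at ha; show k - (k - a) = a; omega
    · intro a ha
      simp only [Finset.mem_Ioc] at ha
      simp only [hu]
      have hak : a ≤ k := by omega
      have hcast : ((k - a : ℕ) : ℝ) = (k : ℝ) - a := Nat.cast_sub hak
      rw [hcast]
      have harg : ((k : ℝ) - a) * Real.pi / k = Real.pi - (a : ℝ) * Real.pi / k := by
        field_simp
      rw [harg, Real.sin_pi_sub]
  rw [hrefl]
  rw [Finset.sum_Ioc_consecutive (fun j => u k j) (Nat.zero_le (k / 2)) (by omega : k / 2 ≤ k - 1)]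
  -- now relate to the original expression
  rw [Finset.sum_div]
  refine Finset.sum_nbij' (fun j => j + 1) (fun j => j - 1) ?_ ?_ ?_ ?_ ?_
  · intro a ha; simp only [Finset.mem_Ioc] at ha; simp only [Finset.mem_Icc]; omega
  · intro a ha; simp only [Finset.mem_Icc] at ha; simp only [Finset.mem_Ioc]; omega
  · intro a ha; simp only [Finset.mem_Ioc] at ha; show a + 1 - 1 = a; omega
  · intro a ha; simp only [Finset.mem_Icc] at ha; show a - 1 + 1 = a; omega
  · intro a ha
    simp only [Finset.mem_Ioc] at ha
    simp only [hu]
    have hcast : ((a + 1 : ℕ) : ℝ) - 1 = (a : ℝ) := by push_cast; ring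
    rw [hcast, div_div, ← mul_pow]
    congr 2
    ring
end

section
/- Let N ≥ 5 and h ∈ (0,1). For α ≥ 1 there is a constant C = C(N,α) such that for all integers k ≥ 2, Σ_{j=1}^{⌊(k-1)/2⌋} ((1-h²)sin²(jπ/k) + h²)^{-α/2} ≤ C·(k/h^{α-1} + k) when α > 1 and h·k ≥ 1. -/
open Real Finset

/-! Each summand is at most `h^(-α)`, since its base is at least `h²`, and at most `(k/j)^α`,
since its base is at least `sin²(jπ/k) ≥ (j/k)²` by Jordan's inequality. Using the first bound for
`j ≤ m := ⌈hk⌉` and the second beyond `m`, the head contributes at most `m h^(-α) ≤ 2k/h^(α-1)`,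
and comparing the tail with `∫ x^(-α)` gives `k^α ∑_{j>m} j^(-α) ≤ k^α m^(1-α)/(α-1) ≤
k/((α-1) h^(α-1))`. -/

lemma sum_Ioc_rpow_neg_le {α : ℝ} (hα : 1 < α) {m : ℕ} (hm : 0 < m) (M : ℕ) :
    ∑ j ∈ Ioc m M, (j : ℝ) ^ (-α) ≤ (m : ℝ) ^ (1 - α) / (α - 1) := by
  have hα1 : 0 < α - 1 := sub_pos.2 hα
  have hm' : (0 : ℝ) < m := by exact_mod_cast hm
  rcases le_total M m with hMm | hmM
  · rw [Ioc_eq_empty_of_le hMm, sum_empty]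
    positivity
  have hanti : AntitoneOn (fun x : ℝ ↦ x ^ (-α)) (Set.Icc (m : ℝ) M) := fun x hx y _ hxy ↦
    rpow_le_rpow_of_nonpos (hm'.trans_le hx.1) hxy (by linarith)
  have hcmp := hanti.sum_le_integral_Ico hmM
  have hzero : (0 : ℝ) ∉ Set.uIcc (m : ℝ) M := by
    rw [Set.uIcc_of_le (by exact_mod_cast hmM)]
    exact fun h0 ↦ hm'.not_ge h0.1
  rw [integral_rpow (Or.inr ⟨by linarith, hzero⟩), show -α + 1 = -(α - 1) by ring] at hcmp
  rw [← Ico_add_one_add_one_eq_Ioc, ← sum_Ico_add' (f := fun j : ℕ ↦ (j : ℝ) ^ (-α))]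
  refine hcmp.trans ?_
  have hM : 0 ≤ (M : ℝ) ^ (-(α - 1)) := by positivity
  rw [show 1 - α = -(α - 1) by ring, div_neg, ← neg_div, neg_sub]
  gcongr
  linarith

lemma sum_Icc_le_of_le_of_le_mul_rpow_neg {f : ℕ → ℝ} {A B α : ℝ} (hα : 1 < α)
    (hA : 0 ≤ A) (hB : 0 ≤ B) {m : ℕ} (hm : 0 < m) {M : ℕ}
    (hfA : ∀ j ∈ Icc 1 M, f j ≤ A) (hfB : ∀ j ∈ Icc 1 M, f j ≤ B * (j : ℝ) ^ (-α)) :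
    ∑ j ∈ Icc 1 M, f j ≤ m * A + B * ((m : ℝ) ^ (1 - α) / (α - 1)) := by
  rw [← sum_filter_add_sum_filter_not _ (· ≤ m)]
  gcongr
  · have hcard : #{j ∈ Icc 1 M | j ≤ m} ≤ m := by
      simpa using card_le_card (s := {j ∈ Icc 1 M | j ≤ m}) (t := Icc 1 m)
        (fun j hj ↦ by simp only [mem_filter, mem_Icc] at hj ⊢; omega)
    calc ∑ j ∈ Icc 1 M with j ≤ m, f j ≤ #{j ∈ Icc 1 M | j ≤ m} • A :=
          sum_le_card_nsmul _ _ _ fun j hj ↦ hfA j (mem_filter.1 hj).1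
      _ ≤ m * A := by rw [nsmul_eq_mul]; gcongr
  · calc ∑ j ∈ Icc 1 M with ¬j ≤ m, f j ≤ ∑ j ∈ Icc 1 M with ¬j ≤ m, B * (j : ℝ) ^ (-α) :=
          sum_le_sum fun j hj ↦ hfB j (mem_filter.1 hj).1
      _ ≤ ∑ j ∈ Ioc m M, B * (j : ℝ) ^ (-α) :=
          sum_le_sum_of_subset_of_nonneg
            (fun j hj ↦ by simp only [mem_filter, mem_Icc, mem_Ioc] at hj ⊢; omega)
            (fun j _ _ ↦ by positivity)
      _ ≤ B * ((m : ℝ) ^ (1 - α) / (α - 1)) := by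
          rw [← mul_sum]; exact mul_le_mul_of_nonneg_left (sum_Ioc_rpow_neg_le hα hm M) hB

lemma div_le_sin_mul_pi_div {j k : ℕ} (hjk : 2 * j ≤ k) : (j : ℝ) / k ≤ sin (j * π / k) := by
  have ht : (j : ℝ) / k ≤ 1 / 2 := by
    rcases k.eq_zero_or_pos with rfl | hk
    · simp
    rw [div_le_div_iff₀ (by exact_mod_cast hk) two_pos]
    exact_mod_cast (by omega : j * 2 ≤ 1 * k)
  have h0 : (0 : ℝ) ≤ j / k := by positivity
  calc (j : ℝ) / k ≤ 2 / π * (π * (j / k)) := by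
        rw [← mul_assoc, div_mul_cancel₀ _ pi_ne_zero]; linarith
    _ ≤ sin (π * (j / k)) := mul_le_sin (by positivity) (by nlinarith [pi_pos])
    _ = sin (j * π / k) := by ring_nf

lemma rpow_neg_div_two_le_of_sq_le {x y a : ℝ} (hy : 0 < y) (hyx : y ^ 2 ≤ x) (ha : 0 ≤ a) :
    x ^ (-a / 2) ≤ y ^ (-a) :=
  calc x ^ (-a / 2) ≤ (y ^ 2) ^ (-a / 2) := rpow_le_rpow_of_nonpos (by positivity) hyx (by linarith)
    _ = y ^ (-a) := by rw [← rpow_natCast, ← rpow_mul hy.le]; ring_nf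

lemma one_sub_sq_mul_add_sq_rpow_le {h s α : ℝ} (hh0 : 0 < h) (hh1 : h ^ 2 ≤ 1) (hα : 0 ≤ α) :
    ((1 - h ^ 2) * s ^ 2 + h ^ 2) ^ (-α / 2) ≤ h ^ (-α) :=
  rpow_neg_div_two_le_of_sq_le hh0 (by nlinarith [sq_nonneg s]) hα

lemma one_sub_sq_mul_sin_sq_add_sq_rpow_le {j k : ℕ} (hj : 0 < j) (hjk : 2 * j ≤ k) {h α : ℝ}
    (hα : 0 ≤ α) :
    ((1 - h ^ 2) * sin (j * π / k) ^ 2 + h ^ 2) ^ (-α / 2) ≤ (k : ℝ) ^ α * (j : ℝ) ^ (-α) := by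
  have hk : (0 : ℝ) < k := by exact_mod_cast (by omega : 0 < k)
  have hjk' : (0 : ℝ) < j / k := by positivity
  have hsin := div_le_sin_mul_pi_div hjk
  have hbase : ((j : ℝ) / k) ^ 2 ≤ (1 - h ^ 2) * sin (j * π / k) ^ 2 + h ^ 2 := by
    nlinarith [pow_le_pow_left₀ hjk'.le hsin 2, mul_nonneg (sq_nonneg h)
      (sub_nonneg.2 (sin_sq_le_one (j * π / k)))]
  refine (rpow_neg_div_two_le_of_sq_le hjk' hbase hα).trans_eq ?_
  rw [div_rpow (by positivity) hk.le, rpow_neg hk.le, div_eq_mul_inv, inv_inv, mul_comm]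

lemma mul_rpow_neg_add_le {α h k m : ℝ} (hα : 1 < α) (hh : 0 < h) (hk : 0 < k)
    (hm_lo : h * k ≤ m) (hm_hi : m ≤ 2 * (h * k)) :
    m * h ^ (-α) + k ^ α * (m ^ (1 - α) / (α - 1)) ≤ (2 + 1 / (α - 1)) * (k / h ^ (α - 1)) := by
  have hα1 : 0 < α - 1 := sub_pos.2 hα
  have hh' : h * h ^ (-α) = (h ^ (α - 1))⁻¹ := by
    rw [← rpow_neg hh.le, ← rpow_one_add' hh.le (by linarith)]; ring_nf
  have hhead : m * h ^ (-α) ≤ 2 * (k / h ^ (α - 1)) :=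
    calc m * h ^ (-α) ≤ 2 * (h * k) * h ^ (-α) := by gcongr
      _ = 2 * (k / h ^ (α - 1)) := by rw [div_eq_mul_inv, ← hh']; ring
  have htail : k ^ α * m ^ (1 - α) ≤ k / h ^ (α - 1) :=
    calc k ^ α * m ^ (1 - α) ≤ k ^ α * (h * k) ^ (1 - α) := by
          gcongr k ^ α * ?_; exact rpow_le_rpow_of_nonpos (by positivity) hm_lo (by linarith)
      _ = k / h ^ (α - 1) := by
          rw [mul_rpow hh.le hk.le, show 1 - α = -(α - 1) by ring, rpow_neg hh.le, rpow_neg hk.le,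
            rpow_sub_one hk.ne']
          field_simp
  calc m * h ^ (-α) + k ^ α * (m ^ (1 - α) / (α - 1))
      = m * h ^ (-α) + k ^ α * m ^ (1 - α) / (α - 1) := by ring
    _ ≤ 2 * (k / h ^ (α - 1)) + k / h ^ (α - 1) / (α - 1) := by gcongr
    _ = (2 + 1 / (α - 1)) * (k / h ^ (α - 1)) := by ring

theorem stmt_13_general (α : ℝ) (hα : 1 < α) :
    ∃ C > 0, ∀ k : ℕ, 2 ≤ k → ∀ h : ℝ, h ∈ Set.Ioo (0:ℝ) 1 → 1 ≤ h * k →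
      ∑ j ∈ Finset.Icc 1 ((k-1)/2),
          ((1-h^2) * Real.sin ((j:ℝ)*Real.pi/k)^2 + h^2) ^ (-α/2)
        ≤ C * ((k:ℝ) / h ^ (α-1) + (k:ℝ)) := by
  have hα0 : 0 ≤ α := by linarith
  refine ⟨2 + 1 / (α - 1), by have := sub_pos.2 hα; positivity, ?_⟩
  rintro k hk h ⟨hh0, hh1⟩ hhk
  have hk0 : (0 : ℝ) < k := by positivity
  set m := ⌈h * k⌉₊
  have hm : 0 < m := Nat.ceil_pos.2 (by linarith)
  have hm_lo : h * k ≤ m := Nat.le_ceil _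
  have hm_hi : (m : ℝ) ≤ 2 * (h * k) := by
    linarith [Nat.ceil_lt_add_one (by positivity : 0 ≤ h * k)]
  calc _ ≤ m * h ^ (-α) + (k : ℝ) ^ α * ((m : ℝ) ^ (1 - α) / (α - 1)) :=
        sum_Icc_le_of_le_of_le_mul_rpow_neg hα (by positivity) (by positivity) hm
          (fun j _ ↦ one_sub_sq_mul_add_sq_rpow_le hh0 (by nlinarith) hα0)
          (fun j hj ↦ one_sub_sq_mul_sin_sq_add_sq_rpow_le (by grind) (by grind) hα0)
    _ ≤ (2 + 1 / (α - 1)) * (k / h ^ (α - 1)) := mul_rpow_neg_add_le hα hh0 hk0 hm_lo hm_hi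
    _ ≤ (2 + 1 / (α - 1)) * (k / h ^ (α - 1) + k) := by
        have := sub_pos.2 hα; gcongr; linarith

/-- Bound `∑_{j=1}^{⌊(k-1)/2⌋} ((1-h²)sin²(jπ/k)+h²)^{-α/2} ≤ C (k/h^{α-1} + k)` for `α > 1`,
`h ∈ (0,1)`, `hk ≥ 1`. -/
theorem stmt_13 (N : ℕ) (hN : 5 ≤ N) (α : ℝ) (hα : 1 < α) :
    ∃ C > 0, ∀ k : ℕ, 2 ≤ k → ∀ h : ℝ, h ∈ Set.Ioo (0:ℝ) 1 → 1 ≤ h * k →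
      ∑ j ∈ Finset.Icc 1 ((k-1)/2),
          ((1-h^2) * Real.sin ((j:ℝ)*Real.pi/k)^2 + h^2) ^ (-α/2)
        ≤ C * ((k:ℝ) / h ^ (α-1) + (k:ℝ)) :=
  stmt_13_general α hα
end

section
/- Let N ≥ 5, 2^* = 2N/(N-2), x, x' ∈ ℝ^N with d = |x - x'| > 0, and μ > 0 with μd ≥ 1. Then ∫_{ℝ^N \ (B_{d/2}(x) ∪ B_{d/2}(x'))} U_{x,μ}^{2^*-1} U_{x',μ} ≤ C/(μ^N d^N) for a constant C depending only on N, where U_{x,μ}(y) = C_N μ^{(N-2)/2}(1+μ²|y-x|²)^{-(N-2)/2}. -/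
open Real MeasureTheory

theorem tail_aux (N : ℕ) (hN : 5 ≤ N) :
    ∃ I : ℝ, 0 ≤ I ∧ ∀ (x : EuclideanSpace ℝ (Fin N)) (r : ℝ), 0 < r →
      IntegrableOn (fun y => ‖y - x‖ ^ (-((N:ℝ)+2))) (Metric.ball x r)ᶜ ∧
      ∫ y in (Metric.ball x r)ᶜ, ‖y - x‖ ^ (-((N:ℝ)+2)) = I / r^2 := by
  classical
  set F : EuclideanSpace ℝ (Fin N) → ℝ :=
    fun z => if 1 ≤ ‖z‖ then ‖z‖ ^ (-((N:ℝ)+2)) else 0 with hF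
  have hFnonneg : ∀ z, 0 ≤ F z := by
    intro z; simp only [hF]; split
    · positivity
    · exact le_refl 0
  have hFmeas : Measurable F := by
    apply Measurable.ite (measurableSet_le measurable_const measurable_norm)
    · fun_prop
    · exact measurable_const
  have hdim : (Module.finrank ℝ (EuclideanSpace ℝ (Fin N)) : ℝ) < (N:ℝ) + 2 := by
    rw [finrank_euclideanSpace_fin]; linarith
  have hFint : Integrable F := by
    refine ((integrable_one_add_norm hdim).const_mul ((2:ℝ) ^ ((N:ℝ)+2))).mono'
      hFmeas.aestronglyMeasurable ?_
    filter_upwards with z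
    rw [Real.norm_eq_abs, abs_of_nonneg (hFnonneg z)]
    simp only [hF]
    split
    · rename_i hz
      have h1 : (0:ℝ) < (1 + ‖z‖)/2 := by positivity
      have h2 : (1 + ‖z‖)/2 ≤ ‖z‖ := by linarith
      calc ‖z‖ ^ (-((N:ℝ)+2)) ≤ ((1 + ‖z‖)/2) ^ (-((N:ℝ)+2)) :=
            Real.rpow_le_rpow_of_nonpos h1 h2 (neg_nonpos.mpr (by positivity))
        _ = 2 ^ ((N:ℝ)+2) * (1 + ‖z‖) ^ (-((N:ℝ)+2)) := by
            rw [Real.div_rpow (by positivity) (by norm_num : (0:ℝ) ≤ 2),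
              Real.rpow_neg (by norm_num : (0:ℝ) ≤ 2), div_eq_mul_inv, inv_inv, mul_comm]
    · positivity
  refine ⟨∫ z, F z, integral_nonneg hFnonneg, ?_⟩
  intro x r hr
  have hrne : r ≠ 0 := hr.ne'
  have h_ind : ∀ y, ((Metric.ball x r)ᶜ).indicator (fun y => ‖y - x‖ ^ (-((N:ℝ)+2))) y
      = r ^ (-((N:ℝ)+2)) * F (r⁻¹ • (y - x)) := by
    intro y
    have hnorm : ‖r⁻¹ • (y - x)‖ = ‖y - x‖ / r := by
      rw [norm_smul, norm_inv, Real.norm_eq_abs, abs_of_pos hr, div_eq_inv_mul]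
    have hmem : y ∈ (Metric.ball x r)ᶜ ↔ r ≤ ‖y - x‖ := by
      simp [Metric.mem_ball, dist_eq_norm, not_lt]
    by_cases hy : y ∈ (Metric.ball x r)ᶜ
    · rw [Set.indicator_of_mem hy]
      have hry : r ≤ ‖y - x‖ := hmem.mp hy
      have hcond : 1 ≤ ‖r⁻¹ • (y - x)‖ := by
        rw [hnorm, le_div_iff₀ hr, one_mul]; exact hry
      simp only [hF, if_pos hcond, hnorm]
      rw [Real.div_rpow (by positivity) hr.le]
      rw [mul_comm, div_mul_cancel₀ _ (ne_of_gt (Real.rpow_pos_of_pos hr _))]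
    · rw [Set.indicator_of_notMem hy]
      have hcond : ¬ (1 ≤ ‖r⁻¹ • (y - x)‖) := by
        rw [hnorm, not_le, div_lt_iff₀ hr, one_mul]
        exact not_le.mp (fun h => hy (hmem.mpr h))
      simp [hF, if_neg hcond]
  have hg1 : Integrable (fun z => F (r⁻¹ • z)) :=
    (integrable_comp_smul_iff volume F (inv_ne_zero hrne)).mpr hFint
  have hg2 : Integrable (fun y => F (r⁻¹ • (y - x))) := hg1.comp_sub_right x
  have hg3 : Integrable (fun y => r ^ (-((N:ℝ)+2)) * F (r⁻¹ • (y - x))) := hg2.const_mul _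
  have hms : MeasurableSet ((Metric.ball x r)ᶜ) := measurableSet_ball.compl
  have hIndInt : Integrable (((Metric.ball x r)ᶜ).indicator
      (fun y => ‖y - x‖ ^ (-((N:ℝ)+2)))) := by
    rw [funext h_ind]; exact hg3
  constructor
  · exact (integrable_indicator_iff hms).mp hIndInt
  · have hval : ∫ y in (Metric.ball x r)ᶜ, ‖y - x‖ ^ (-((N:ℝ)+2))
        = r ^ (-((N:ℝ)+2)) * ((r ^ N) * ∫ z, F z) := by
      rw [← integral_indicator hms, funext h_ind, integral_const_mul,
        integral_sub_right_eq_self (fun z => F (r⁻¹ • z)) x,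
        Measure.integral_comp_inv_smul_of_nonneg volume F hr.le]
      rw [finrank_euclideanSpace_fin, smul_eq_mul]
    rw [hval]
    have hc : r ^ (-((N:ℝ)+2)) = (r ^ (N + 2 : ℕ))⁻¹ := by
      rw [Real.rpow_neg hr.le]
      congr 1
      rw [← Real.rpow_natCast r (N+2)]
      push_cast; ring_nf
    rw [hc, pow_add]
    field_simp

/-- Interaction integral away from the two bubbles: bound by `C/(μ^N d^N)`. -/
theorem stmt_14 (N : ℕ) (hN : 5 ≤ N)
    (CN : ℝ) (hCN : CN = ((N:ℝ)*((N:ℝ)-2)) ^ (((N:ℝ)-2)/4))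
    (U : EuclideanSpace ℝ (Fin N) → ℝ → EuclideanSpace ℝ (Fin N) → ℝ)
    (hU : ∀ x μ y, U x μ y = CN * μ ^ (((N:ℝ)-2)/2) * (1 + μ^2 * ‖y - x‖^2) ^ (-(((N:ℝ)-2)/2))) :
    ∃ C > 0, ∀ (x x' : EuclideanSpace ℝ (Fin N)) (μ d : ℝ),
      0 < μ → d = dist x x' → 0 < d → 1 ≤ μ * d →
      ∫ y in (Set.univ \ (Metric.ball x (d/2) ∪ Metric.ball x' (d/2))),
          (U x μ y) ^ (((N:ℝ)+2)/((N:ℝ)-2)) * U x' μ y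
        ≤ C / (μ^N * d^N) := by
  obtain ⟨I, hI0, hI⟩ := tail_aux N hN
  have hN5 : (5:ℝ) ≤ (N:ℝ) := by exact_mod_cast hN
  have hN2 : (0:ℝ) < (N:ℝ) - 2 := by linarith
  have hNne : ((N:ℝ) - 2) ≠ 0 := ne_of_gt hN2
  have hCNpos : 0 < CN := by
    rw [hCN]; exact Real.rpow_pos_of_pos (by nlinarith) _
  set p : ℝ := ((N:ℝ)+2)/((N:ℝ)-2) with hp
  have hA1 : 0 < CN ^ (p+1) := Real.rpow_pos_of_pos hCNpos _
  have h2N : (0:ℝ) < 2^N := by positivity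
  refine ⟨CN ^ (p+1) * 2^N * I + 1,
    by nlinarith [mul_nonneg (mul_nonneg hA1.le h2N.le) hI0], ?_⟩
  intro x x' μ d hμ _hdd hd0 _hμd
  have hd2 : 0 < d/2 := by linarith
  have hap : (((N:ℝ)-2)/2) * p = ((N:ℝ)+2)/2 := by
    rw [hp]; field_simp
  have hsq : ∀ (b c : ℝ), 0 ≤ b → (b^2) ^ (-(c/2)) = b ^ (-c) := by
    intro b c hb
    rw [← Real.rpow_natCast b 2, ← Real.rpow_mul hb]
    congr 1; push_cast; ring
  have hUpos : ∀ z y, 0 < U z μ y := by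
    intro z y; rw [hU]
    have hT : (0:ℝ) < 1 + μ^2*‖y-z‖^2 := by positivity
    exact mul_pos (mul_pos hCNpos (Real.rpow_pos_of_pos hμ _)) (Real.rpow_pos_of_pos hT _)
  set S := (Set.univ \ (Metric.ball x (d/2) ∪ Metric.ball x' (d/2))) with hSdef
  have hS_sub : S ⊆ (Metric.ball x (d/2))ᶜ := fun y hy h => hy.2 (Or.inl h)
  have hSmeas : MeasurableSet S :=
    MeasurableSet.univ.diff (Metric.isOpen_ball.union Metric.isOpen_ball).measurableSet
  -- pointwise bound
  have hpt : ∀ y ∈ S, (U x μ y) ^ p * U x' μ y ≤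
      (CN^(p+1) * μ^(-(N:ℝ)) * (d/2)^(-((N:ℝ)-2))) * ‖y - x‖ ^ (-((N:ℝ)+2)) := by
    intro y hy
    have hyx : d/2 ≤ ‖y - x‖ := by
      have h1 : y ∉ Metric.ball x (d/2) := fun h => hy.2 (Or.inl h)
      simpa [Metric.mem_ball, dist_eq_norm, not_lt] using h1
    have hyx' : d/2 ≤ ‖y - x'‖ := by
      have h1 : y ∉ Metric.ball x' (d/2) := fun h => hy.2 (Or.inr h)
      simpa [Metric.mem_ball, dist_eq_norm, not_lt] using h1
    have hnx : 0 < ‖y - x‖ := lt_of_lt_of_le hd2 hyx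
    have hT : (0:ℝ) < 1 + μ^2*‖y-x‖^2 := by positivity
    have hUx : (U x μ y) ^ p
        = CN^p * μ^(((N:ℝ)+2)/2) * (1 + μ^2*‖y-x‖^2)^(-(((N:ℝ)+2)/2)) := by
      rw [hU]
      rw [Real.mul_rpow (mul_nonneg hCNpos.le (Real.rpow_nonneg hμ.le _))
            (Real.rpow_nonneg hT.le _),
          Real.mul_rpow hCNpos.le (Real.rpow_nonneg hμ.le _),
          ← Real.rpow_mul hμ.le, ← Real.rpow_mul hT.le, neg_mul, hap]
    have hB : (1 + μ^2*‖y-x‖^2)^(-(((N:ℝ)+2)/2))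
        ≤ μ^(-((N:ℝ)+2)) * ‖y-x‖^(-((N:ℝ)+2)) := by
      have h1 : (μ*‖y-x‖)^2 ≤ 1 + μ^2*‖y-x‖^2 := by rw [mul_pow]; linarith
      have h2 : (0:ℝ) < (μ*‖y-x‖)^2 := by positivity
      calc (1 + μ^2*‖y-x‖^2)^(-(((N:ℝ)+2)/2))
          ≤ ((μ*‖y-x‖)^2)^(-(((N:ℝ)+2)/2)) :=
            Real.rpow_le_rpow_of_nonpos h2 h1 (neg_nonpos.mpr (by positivity))
        _ = (μ*‖y-x‖)^(-((N:ℝ)+2)) := hsq _ _ (by positivity)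
        _ = μ^(-((N:ℝ)+2)) * ‖y-x‖^(-((N:ℝ)+2)) := Real.mul_rpow hμ.le (norm_nonneg _)
    have hC : U x' μ y ≤ CN * μ^(((N:ℝ)-2)/2) * (μ^(-((N:ℝ)-2)) * (d/2)^(-((N:ℝ)-2))) := by
      rw [hU]
      refine mul_le_mul_of_nonneg_left ?_
        (mul_nonneg hCNpos.le (Real.rpow_nonneg hμ.le _))
      have h1 : (μ*(d/2))^2 ≤ 1 + μ^2*‖y-x'‖^2 := by
        have h2 := mul_le_mul_of_nonneg_left (pow_le_pow_left₀ hd2.le hyx' 2) (sq_nonneg μ)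
        rw [mul_pow]; nlinarith
      have h2 : (0:ℝ) < (μ*(d/2))^2 := by positivity
      calc (1 + μ^2*‖y-x'‖^2)^(-(((N:ℝ)-2)/2))
          ≤ ((μ*(d/2))^2)^(-(((N:ℝ)-2)/2)) :=
            Real.rpow_le_rpow_of_nonpos h2 h1 (neg_nonpos.mpr (by positivity))
        _ = (μ*(d/2))^(-((N:ℝ)-2)) := hsq _ _ (by positivity)
        _ = μ^(-((N:ℝ)-2)) * (d/2)^(-((N:ℝ)-2)) := Real.mul_rpow hμ.le hd2.le
    have e1 : μ^(((N:ℝ)+2)/2) * μ^(-((N:ℝ)+2)) * μ^(((N:ℝ)-2)/2) * μ^(-((N:ℝ)-2))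
        = μ^(-(N:ℝ)) := by
      rw [← Real.rpow_add hμ, ← Real.rpow_add hμ, ← Real.rpow_add hμ]
      congr 1; ring
    have e2 : CN^p * CN = CN^(p+1) := (Real.rpow_add_one hCNpos.ne' p).symm
    calc (U x μ y) ^ p * U x' μ y
        = (CN^p * μ^(((N:ℝ)+2)/2) * (1 + μ^2*‖y-x‖^2)^(-(((N:ℝ)+2)/2))) * U x' μ y := by
          rw [hUx]
      _ ≤ (CN^p * μ^(((N:ℝ)+2)/2) * (μ^(-((N:ℝ)+2)) * ‖y-x‖^(-((N:ℝ)+2))))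
            * (CN * μ^(((N:ℝ)-2)/2) * (μ^(-((N:ℝ)-2)) * (d/2)^(-((N:ℝ)-2)))) := by
          refine mul_le_mul ?_ hC (hUpos x' y).le ?_
          · exact mul_le_mul_of_nonneg_left hB
              (mul_nonneg (Real.rpow_nonneg hCNpos.le _) (Real.rpow_nonneg hμ.le _))
          · exact mul_nonneg (mul_nonneg (Real.rpow_nonneg hCNpos.le _)
              (Real.rpow_nonneg hμ.le _))
              (mul_nonneg (Real.rpow_nonneg hμ.le _) (Real.rpow_nonneg (norm_nonneg _) _))
      _ = (CN^(p+1) * μ^(-(N:ℝ)) * (d/2)^(-((N:ℝ)-2))) * ‖y - x‖ ^ (-((N:ℝ)+2)) := by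
          rw [← e2, ← e1]; ring
  have htail := hI x (d/2) hd2
  have hK0 : 0 ≤ CN^(p+1) * μ^(-(N:ℝ)) * (d/2)^(-((N:ℝ)-2)) :=
    mul_nonneg (mul_nonneg hA1.le (Real.rpow_nonneg hμ.le _)) (Real.rpow_nonneg hd2.le _)
  have hbd_int_S : IntegrableOn
      (fun y => (CN^(p+1) * μ^(-(N:ℝ)) * (d/2)^(-((N:ℝ)-2))) * ‖y - x‖ ^ (-((N:ℝ)+2))) S := by
    have hbd : IntegrableOn
        (fun y => (CN^(p+1) * μ^(-(N:ℝ)) * (d/2)^(-((N:ℝ)-2))) * ‖y - x‖ ^ (-((N:ℝ)+2)))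
        (Metric.ball x (d/2))ᶜ := htail.1.const_mul _
    exact hbd.mono_set hS_sub
  have hcont : Continuous (fun y : EuclideanSpace ℝ (Fin N) => (U x μ y) ^ p * U x' μ y) := by
    have hu : ∀ z, Continuous (U z μ) := by
      intro z
      have hz : (U z μ) = fun y => CN * μ^(((N:ℝ)-2)/2)
          * (1 + μ^2*‖y-z‖^2)^(-(((N:ℝ)-2)/2)) := funext (hU z μ)
      rw [hz]
      have hb : Continuous (fun y : EuclideanSpace ℝ (Fin N) => 1 + μ^2*‖y - z‖^2) := by
        fun_prop
      exact continuous_const.mul (hb.rpow_const (fun y => Or.inl (by positivity)))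
    exact ((hu x).rpow_const (fun y => Or.inl (hUpos x y).ne')).mul (hu x')
  have hint_S : IntegrableOn (fun y => (U x μ y) ^ p * U x' μ y) S := by
    refine hbd_int_S.mono' hcont.aestronglyMeasurable.restrict ?_
    refine (ae_restrict_iff' hSmeas).mpr (Filter.Eventually.of_forall fun y hy => ?_)
    rw [Real.norm_eq_abs, abs_of_nonneg
      (mul_nonneg (Real.rpow_nonneg (hUpos x y).le p) (hUpos x' y).le)]
    exact hpt y hy
  have hmu : μ^(-(N:ℝ)) = (μ^N)⁻¹ := by rw [Real.rpow_neg hμ.le, Real.rpow_natCast]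
  have hdd2 : (d/2:ℝ)^(-((N:ℝ)-2)) / (d/2)^2 = 2^N * (d^N)⁻¹ := by
    have h1 : (d/2:ℝ)^(-((N:ℝ)-2)) / (d/2)^2 = (d/2)^(-(N:ℝ)) := by
      rw [← Real.rpow_natCast (d/2) 2, ← Real.rpow_sub hd2]
      congr 1; push_cast; ring
    rw [h1, Real.rpow_neg hd2.le, Real.rpow_natCast, div_pow, inv_div, div_eq_mul_inv]
  calc ∫ y in S, (U x μ y) ^ p * U x' μ y
      ≤ ∫ y in S, (CN^(p+1) * μ^(-(N:ℝ)) * (d/2)^(-((N:ℝ)-2))) * ‖y - x‖ ^ (-((N:ℝ)+2)) :=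
        setIntegral_mono_on hint_S hbd_int_S hSmeas hpt
    _ = (CN^(p+1) * μ^(-(N:ℝ)) * (d/2)^(-((N:ℝ)-2)))
          * ∫ y in S, ‖y - x‖ ^ (-((N:ℝ)+2)) := integral_const_mul _ _
    _ ≤ (CN^(p+1) * μ^(-(N:ℝ)) * (d/2)^(-((N:ℝ)-2)))
          * ∫ y in (Metric.ball x (d/2))ᶜ, ‖y - x‖ ^ (-((N:ℝ)+2)) := by
        refine mul_le_mul_of_nonneg_left ?_ hK0
        exact setIntegral_mono_set htail.1
          (Filter.Eventually.of_forall fun y => Real.rpow_nonneg (norm_nonneg _) _)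
          (HasSubset.Subset.eventuallyLE hS_sub)
    _ = (CN^(p+1) * μ^(-(N:ℝ)) * (d/2)^(-((N:ℝ)-2))) * (I / (d/2)^2) := by rw [htail.2]
    _ = (CN^(p+1) * 2^N * I) / (μ^N * d^N) := by
        calc (CN^(p+1) * μ^(-(N:ℝ)) * (d/2)^(-((N:ℝ)-2))) * (I / (d/2)^2)
            = CN^(p+1) * μ^(-(N:ℝ)) * ((d/2)^(-((N:ℝ)-2)) / (d/2)^2) * I := by ring
          _ = CN^(p+1) * (μ^N)⁻¹ * (2^N * (d^N)⁻¹) * I := by rw [hmu, hdd2]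
          _ = (CN^(p+1) * 2^N * I) / (μ^N * d^N) := by
              rw [div_eq_mul_inv, mul_inv]; ring
    _ ≤ (CN^(p+1) * 2^N * I + 1) / (μ^N * d^N) := by
        have hpos : (0:ℝ) < μ^N * d^N := mul_pos (pow_pos hμ N) (pow_pos hd0 N)
        exact (div_le_div_iff_of_pos_right hpos).mpr (by linarith)
end

section
/- Let N ≥ 5, x, x' ∈ ℝ^N with d = |x - x'| > 0, and μ > 0 with μd ≥ 1. Then ∫_{ℝ^N} U_{x,μ} U_{x',μ} ≤ C/(μ^{N-2} d^{N-4}) for a constant C depending only on N, where U_{x,μ}(y) = C_N μ^{(N-2)/2}(1+μ²|y-x|²)^{-(N-2)/2}. -/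
open Real MeasureTheory

open Metric Set Module
open scoped ENNReal

set_option maxHeartbeats 2000000

lemma radial_inner (N : ℕ) (hN : 1 ≤ N) (p : ℝ) (hp : 0 < p) (hpN : p < N) :
    ∃ S : ℝ≥0∞, S ≠ ⊤ ∧ ∀ (x : EuclideanSpace ℝ (Fin N)) (R : ℝ), 0 < R →
      ∫⁻ y in ball x R, ENNReal.ofReal (‖y - x‖ ^ (-p)) ≤ ENNReal.ofReal (R ^ ((N:ℝ) - p)) * S := by
  classical
  set E := EuclideanSpace ℝ (Fin N) with hE
  haveI : Nonempty (Fin N) := ⟨⟨0, by omega⟩⟩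
  have hfr : finrank ℝ E = N := finrank_euclideanSpace_fin
  set v₁ : ℝ≥0∞ := volume (ball (0:E) 1) with hv₁
  have hc0 : (0:ℝ) ≤ 2 ^ (p - (N:ℝ)) := by positivity
  have hc1 : (2:ℝ) ^ (p - (N:ℝ)) < 1 :=
    Real.rpow_lt_one_of_one_lt_of_neg (by norm_num) (by linarith)
  set c : ℝ≥0∞ := ENNReal.ofReal ((2:ℝ) ^ (p - (N:ℝ))) with hc
  have hclt : c < 1 := by
    rw [hc, ← ENNReal.ofReal_one]
    exact (ENNReal.ofReal_lt_ofReal_iff_of_nonneg hc0).mpr hc1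
  have hgeo : (∑' k : ℕ, c ^ k) ≠ ⊤ := by
    rw [ENNReal.tsum_geometric]
    exact ENNReal.inv_ne_top.mpr (tsub_pos_of_lt hclt).ne'
  refine ⟨ENNReal.ofReal ((2:ℝ) ^ p) * v₁ * (∑' k : ℕ, c ^ k), ?_, ?_⟩
  · exact ENNReal.mul_ne_top (ENNReal.mul_ne_top ENNReal.ofReal_ne_top
      measure_ball_lt_top.ne) hgeo
  intro x R hR
  have hkey : ∀ k : ℕ, ((2:ℝ)⁻¹) ^ k = (2:ℝ) ^ (-(k:ℝ)) := fun k => by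
    rw [Real.rpow_neg (by norm_num), Real.rpow_natCast, inv_pow]
  set r : ℕ → ℝ := fun k => R * (2⁻¹:ℝ) ^ k with hr
  have hrpos : ∀ k, 0 < r k := fun k => by positivity
  set A : ℕ → Set E := fun k => ball x (r k) \ ball x (r (k+1)) with hA
  have cover : ball x R ⊆ {x} ∪ ⋃ k, A k := by
    intro y hy
    by_cases hyx : y = x
    · exact Or.inl (by simp [hyx])
    refine Or.inr ?_
    have hd : 0 < dist y x := dist_pos.2 hyx
    have hex : ∃ k, r (k+1) ≤ dist y x := by
      obtain ⟨n, hn⟩ := exists_pow_lt_of_lt_one (div_pos hd hR) (by norm_num : (2⁻¹:ℝ) < 1)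
      refine ⟨n, le_of_lt ?_⟩
      have h1 : r (n+1) ≤ R * (2⁻¹:ℝ) ^ n := by
        have : ((2:ℝ)⁻¹) ^ (n+1) ≤ ((2:ℝ)⁻¹) ^ n :=
          pow_le_pow_of_le_one (by norm_num) (by norm_num) (by omega)
        exact mul_le_mul_of_nonneg_left this hR.le
      calc r (n+1) ≤ R * (2⁻¹:ℝ) ^ n := h1
        _ < R * (dist y x / R) := by
            exact mul_lt_mul_of_pos_left hn hR
        _ = dist y x := by field_simp
    have hk1 : r (Nat.find hex + 1) ≤ dist y x := Nat.find_spec hex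
    have hk2 : dist y x < r (Nat.find hex) := by
      rcases h0 : Nat.find hex with _ | m
      · simpa [hr] using hy
      · have hm : m < Nat.find hex := by omega
        exact lt_of_not_ge (Nat.find_min hex hm)
    exact mem_iUnion.2 ⟨Nat.find hex,
      ⟨mem_ball.2 hk2, fun h => absurd (mem_ball.1 h) (not_lt.2 hk1)⟩⟩
  have hcoef : ∀ k : ℕ, (r (k+1)) ^ (-p) * (r k) ^ N
      = R ^ ((N:ℝ) - p) * ((2:ℝ) ^ p * ((2:ℝ) ^ (p - (N:ℝ))) ^ k) := by
    intro k
    have e1 : (r (k+1)) ^ (-p) = R ^ (-p) * (2:ℝ) ^ (((k:ℝ)+1) * p) := by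
      rw [hr]
      simp only []
      rw [hkey (k+1), Real.mul_rpow hR.le (by positivity),
        ← Real.rpow_mul (by norm_num : (0:ℝ) ≤ 2)]
      congr 2
      push_cast; ring
    have e2 : (r k) ^ N = R ^ ((N:ℝ)) * (2:ℝ) ^ (-((k:ℝ) * N)) := by
      rw [hr]
      simp only []
      rw [mul_pow, ← pow_mul, hkey (k*N), ← Real.rpow_natCast R N]
      congr 2
      push_cast; ring
    rw [e1, e2, ← Real.rpow_natCast ((2:ℝ) ^ (p - (N:ℝ))) k,
      ← Real.rpow_mul (by norm_num : (0:ℝ) ≤ 2)]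
    rw [show R ^ (-p) * (2:ℝ) ^ (((k:ℝ)+1) * p) * (R ^ ((N:ℝ)) * (2:ℝ) ^ (-((k:ℝ) * N)))
        = (R ^ (-p) * R ^ ((N:ℝ))) * ((2:ℝ) ^ (((k:ℝ)+1) * p) * (2:ℝ) ^ (-((k:ℝ) * N))) by ring,
      ← Real.rpow_add hR, ← Real.rpow_add (by norm_num : (0:ℝ) < 2),
      show -p + (N:ℝ) = (N:ℝ) - p by ring,
      show ((k:ℝ)+1) * p + -((k:ℝ) * N) = p + (p - (N:ℝ)) * (k:ℕ) by push_cast; ring,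
      Real.rpow_add (by norm_num : (0:ℝ) < 2)]
  calc ∫⁻ y in ball x R, ENNReal.ofReal (‖y - x‖ ^ (-p))
      ≤ ∫⁻ y in {x} ∪ ⋃ k, A k, ENNReal.ofReal (‖y - x‖ ^ (-p)) := lintegral_mono_set cover
    _ ≤ (∫⁻ y in ({x} : Set E), ENNReal.ofReal (‖y - x‖ ^ (-p)))
        + ∫⁻ y in ⋃ k, A k, ENNReal.ofReal (‖y - x‖ ^ (-p)) := lintegral_union_le _ _ _
    _ = ∫⁻ y in ⋃ k, A k, ENNReal.ofReal (‖y - x‖ ^ (-p)) := by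
        rw [setLIntegral_measure_zero _ _ (measure_singleton x), zero_add]
    _ ≤ ∑' k, ∫⁻ y in A k, ENNReal.ofReal (‖y - x‖ ^ (-p)) := lintegral_iUnion_le _ _
    _ ≤ ∑' k, ENNReal.ofReal (R ^ ((N:ℝ) - p)) * (ENNReal.ofReal ((2:ℝ) ^ p) * v₁ * c ^ k) := by
        refine ENNReal.tsum_le_tsum fun k => ?_
        have hb : ∀ y ∈ A k, ENNReal.ofReal (‖y - x‖ ^ (-p))
            ≤ ENNReal.ofReal ((r (k+1)) ^ (-p)) := by
          intro y hyk
          have h1 : r (k+1) ≤ ‖y - x‖ := by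
            have := hyk.2
            rw [mem_ball, not_lt] at this
            rwa [dist_eq_norm] at this
          exact ENNReal.ofReal_le_ofReal
            (Real.rpow_le_rpow_of_nonpos (hrpos (k+1)) h1 (by linarith))
        calc ∫⁻ y in A k, ENNReal.ofReal (‖y - x‖ ^ (-p))
            ≤ ∫⁻ _ in A k, ENNReal.ofReal ((r (k+1)) ^ (-p)) :=
              setLIntegral_mono' (measurableSet_ball.diff measurableSet_ball) hb
          _ = ENNReal.ofReal ((r (k+1)) ^ (-p)) * volume (A k) := setLIntegral_const _ _
          _ ≤ ENNReal.ofReal ((r (k+1)) ^ (-p)) * (ENNReal.ofReal ((r k) ^ N) * v₁) := by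
              refine mul_le_mul_right ?_ _
              have : volume (A k) ≤ volume (ball x (r k)) := measure_mono diff_subset
              rwa [Measure.addHaar_ball volume x (hrpos k).le, hfr] at this
          _ = ENNReal.ofReal ((r (k+1)) ^ (-p) * (r k) ^ N) * v₁ := by
              rw [ENNReal.ofReal_mul (by positivity), mul_assoc]
          _ = ENNReal.ofReal (R ^ ((N:ℝ) - p)) * (ENNReal.ofReal ((2:ℝ) ^ p) * v₁ * c ^ k) := by
              rw [hcoef k, ENNReal.ofReal_mul (by positivity),
                ENNReal.ofReal_mul (by positivity), hc, ← ENNReal.ofReal_pow hc0]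
              ring
    _ = ENNReal.ofReal (R ^ ((N:ℝ) - p)) * (ENNReal.ofReal ((2:ℝ) ^ p) * v₁ * ∑' k, c ^ k) := by
        have h : ∀ k : ℕ, ENNReal.ofReal (R ^ ((N:ℝ) - p)) *
            (ENNReal.ofReal ((2:ℝ) ^ p) * v₁ * c ^ k)
            = (ENNReal.ofReal (R ^ ((N:ℝ) - p)) * (ENNReal.ofReal ((2:ℝ) ^ p) * v₁)) * c ^ k :=
          fun k => by ring
        rw [tsum_congr h, ENNReal.tsum_mul_left, mul_assoc]

lemma radial_outer (N : ℕ) (hN : 1 ≤ N) (p : ℝ) (hpN : (N:ℝ) < p) :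
    ∃ S : ℝ≥0∞, S ≠ ⊤ ∧ ∀ (x : EuclideanSpace ℝ (Fin N)) (R : ℝ), 0 < R →
      ∫⁻ y in (ball x R)ᶜ, ENNReal.ofReal (‖y - x‖ ^ (-p)) ≤ ENNReal.ofReal (R ^ ((N:ℝ) - p)) * S := by
  classical
  set E := EuclideanSpace ℝ (Fin N) with hE
  haveI : Nonempty (Fin N) := ⟨⟨0, by omega⟩⟩
  have hfr : finrank ℝ E = N := finrank_euclideanSpace_fin
  have hp : 0 < p := lt_of_le_of_lt (by positivity) hpN
  set v₁ : ℝ≥0∞ := volume (ball (0:E) 1) with hv₁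
  have hc0 : (0:ℝ) ≤ 2 ^ ((N:ℝ) - p) := by positivity
  have hc1 : (2:ℝ) ^ ((N:ℝ) - p) < 1 :=
    Real.rpow_lt_one_of_one_lt_of_neg (by norm_num) (by linarith)
  set c : ℝ≥0∞ := ENNReal.ofReal ((2:ℝ) ^ ((N:ℝ) - p)) with hc
  have hclt : c < 1 := by
    rw [hc, ← ENNReal.ofReal_one]
    exact (ENNReal.ofReal_lt_ofReal_iff_of_nonneg hc0).mpr hc1
  have hgeo : (∑' k : ℕ, c ^ k) ≠ ⊤ := by
    rw [ENNReal.tsum_geometric]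
    exact ENNReal.inv_ne_top.mpr (tsub_pos_of_lt hclt).ne'
  refine ⟨ENNReal.ofReal ((2:ℝ) ^ (N:ℕ)) * v₁ * (∑' k : ℕ, c ^ k), ?_, ?_⟩
  · exact ENNReal.mul_ne_top (ENNReal.mul_ne_top ENNReal.ofReal_ne_top
      measure_ball_lt_top.ne) hgeo
  intro x R hR
  set r : ℕ → ℝ := fun k => R * (2:ℝ) ^ k with hr
  have hrpos : ∀ k, 0 < r k := fun k => by positivity
  set B : ℕ → Set E := fun k => ball x (r (k+1)) \ ball x (r k) with hB
  have cover : (ball x R)ᶜ ⊆ ⋃ k, B k := by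
    intro y hy
    have hd : R ≤ dist y x := by
      rw [mem_compl_iff, mem_ball, not_lt] at hy; exact hy
    have hex : ∃ k, dist y x < r (k+1) := by
      obtain ⟨n, hn⟩ := pow_unbounded_of_one_lt (dist y x / R) (by norm_num : (1:ℝ) < 2)
      refine ⟨n, ?_⟩
      have h1 : dist y x < R * 2 ^ n := by
        rw [div_lt_iff₀ hR] at hn; linarith [hn]
      have h2 : R * (2:ℝ) ^ n ≤ r (n+1) := by
        have : (2:ℝ) ^ n ≤ 2 ^ (n+1) := by
          apply pow_le_pow_right₀ (by norm_num) (by omega)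
        exact mul_le_mul_of_nonneg_left this hR.le
      linarith
    have hk1 : dist y x < r (Nat.find hex + 1) := Nat.find_spec hex
    have hk2 : r (Nat.find hex) ≤ dist y x := by
      rcases h0 : Nat.find hex with _ | m
      · simpa [hr] using hd
      · have hm : m < Nat.find hex := by omega
        exact le_of_not_gt (Nat.find_min hex hm)
    exact mem_iUnion.2 ⟨Nat.find hex,
      ⟨mem_ball.2 hk1, fun h => absurd (mem_ball.1 h) (not_lt.2 hk2)⟩⟩
  have hcoef : ∀ k : ℕ, (r k) ^ (-p) * (r (k+1)) ^ N
      = R ^ ((N:ℝ) - p) * ((2:ℝ) ^ (N:ℕ) * ((2:ℝ) ^ ((N:ℝ) - p)) ^ k) := by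
    intro k
    have e1 : (r k) ^ (-p) = R ^ (-p) * (2:ℝ) ^ (-((k:ℝ) * p)) := by
      rw [hr]
      simp only []
      rw [← Real.rpow_natCast (2:ℝ) k, Real.mul_rpow hR.le (by positivity),
        ← Real.rpow_mul (by norm_num : (0:ℝ) ≤ 2)]
      congr 2
      ring
    have e2 : (r (k+1)) ^ N = R ^ ((N:ℝ)) * (2:ℝ) ^ (((k:ℝ)+1) * N) := by
      rw [hr]
      simp only []
      rw [mul_pow, ← pow_mul, ← Real.rpow_natCast (2:ℝ) ((k+1)*N), ← Real.rpow_natCast R N]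
      congr 2
      push_cast; ring
    rw [e1, e2, ← Real.rpow_natCast ((2:ℝ) ^ ((N:ℝ) - p)) k,
      ← Real.rpow_mul (by norm_num : (0:ℝ) ≤ 2), ← Real.rpow_natCast (2:ℝ) N]
    rw [show R ^ (-p) * (2:ℝ) ^ (-((k:ℝ) * p)) * (R ^ ((N:ℝ)) * (2:ℝ) ^ (((k:ℝ)+1) * N))
        = (R ^ (-p) * R ^ ((N:ℝ))) * ((2:ℝ) ^ (-((k:ℝ) * p)) * (2:ℝ) ^ (((k:ℝ)+1) * N)) by ring,
      ← Real.rpow_add hR, ← Real.rpow_add (by norm_num : (0:ℝ) < 2),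
      show -p + (N:ℝ) = (N:ℝ) - p by ring,
      show -((k:ℝ) * p) + ((k:ℝ)+1) * N = (N:ℕ) + ((N:ℝ) - p) * (k:ℕ) by push_cast; ring,
      Real.rpow_add (by norm_num : (0:ℝ) < 2)]
  calc ∫⁻ y in (ball x R)ᶜ, ENNReal.ofReal (‖y - x‖ ^ (-p))
      ≤ ∫⁻ y in ⋃ k, B k, ENNReal.ofReal (‖y - x‖ ^ (-p)) := lintegral_mono_set cover
    _ ≤ ∑' k, ∫⁻ y in B k, ENNReal.ofReal (‖y - x‖ ^ (-p)) := lintegral_iUnion_le _ _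
    _ ≤ ∑' k, ENNReal.ofReal (R ^ ((N:ℝ) - p)) * (ENNReal.ofReal ((2:ℝ) ^ (N:ℕ)) * v₁ * c ^ k) := by
        refine ENNReal.tsum_le_tsum fun k => ?_
        have hb : ∀ y ∈ B k, ENNReal.ofReal (‖y - x‖ ^ (-p))
            ≤ ENNReal.ofReal ((r k) ^ (-p)) := by
          intro y hyk
          have h1 : r k ≤ ‖y - x‖ := by
            have := hyk.2
            rw [mem_ball, not_lt] at this
            rwa [dist_eq_norm] at this
          exact ENNReal.ofReal_le_ofReal
            (Real.rpow_le_rpow_of_nonpos (hrpos k) h1 (by linarith))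
        calc ∫⁻ y in B k, ENNReal.ofReal (‖y - x‖ ^ (-p))
            ≤ ∫⁻ _ in B k, ENNReal.ofReal ((r k) ^ (-p)) :=
              setLIntegral_mono' (measurableSet_ball.diff measurableSet_ball) hb
          _ = ENNReal.ofReal ((r k) ^ (-p)) * volume (B k) := setLIntegral_const _ _
          _ ≤ ENNReal.ofReal ((r k) ^ (-p)) * (ENNReal.ofReal ((r (k+1)) ^ N) * v₁) := by
              refine mul_le_mul_right ?_ _
              have : volume (B k) ≤ volume (ball x (r (k+1))) := measure_mono diff_subset
              rwa [Measure.addHaar_ball volume x (hrpos (k+1)).le, hfr] at this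
          _ = ENNReal.ofReal ((r k) ^ (-p) * (r (k+1)) ^ N) * v₁ := by
              rw [ENNReal.ofReal_mul (by positivity), mul_assoc]
          _ = ENNReal.ofReal (R ^ ((N:ℝ) - p)) * (ENNReal.ofReal ((2:ℝ) ^ (N:ℕ)) * v₁ * c ^ k) := by
              rw [hcoef k, ENNReal.ofReal_mul (by positivity),
                ENNReal.ofReal_mul (by positivity), hc, ← ENNReal.ofReal_pow hc0]
              ring
    _ = ENNReal.ofReal (R ^ ((N:ℝ) - p)) * (ENNReal.ofReal ((2:ℝ) ^ (N:ℕ)) * v₁ * ∑' k, c ^ k) := by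
        have h : ∀ k : ℕ, ENNReal.ofReal (R ^ ((N:ℝ) - p)) *
            (ENNReal.ofReal ((2:ℝ) ^ (N:ℕ)) * v₁ * c ^ k)
            = (ENNReal.ofReal (R ^ ((N:ℝ) - p)) * (ENNReal.ofReal ((2:ℝ) ^ (N:ℕ)) * v₁)) * c ^ k :=
          fun k => by ring
        rw [tsum_congr h, ENNReal.tsum_mul_left, mul_assoc]

/-- `∫ U_{x,μ} U_{x',μ} ≤ C/(μ^{N-2} d^{N-4})`. -/
theorem stmt_15 (N : ℕ) (hN : 5 ≤ N)
    (CN : ℝ) (hCN : CN = ((N:ℝ)*((N:ℝ)-2)) ^ (((N:ℝ)-2)/4))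
    (U : EuclideanSpace ℝ (Fin N) → ℝ → EuclideanSpace ℝ (Fin N) → ℝ)
    (hU : ∀ x μ y, U x μ y = CN * μ ^ (((N:ℝ)-2)/2) * (1 + μ^2 * ‖y - x‖^2) ^ (-(((N:ℝ)-2)/2))) :
    ∃ C > 0, ∀ (x x' : EuclideanSpace ℝ (Fin N)) (μ d : ℝ),
      0 < μ → d = dist x x' → 0 < d → 1 ≤ μ * d →
      ∫ y : EuclideanSpace ℝ (Fin N), U x μ y * U x' μ y ≤ C / (μ^(N-2) * d^(N-4)) := by
  classical
  haveI : Nonempty (Fin N) := ⟨⟨0, by omega⟩⟩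
  have hNR : (5:ℝ) ≤ (N:ℝ) := by exact_mod_cast hN
  set q : ℝ := ((N:ℝ)-2)/2 with hqdef
  have hq0 : 0 < q := by rw [hqdef]; linarith
  set b : ℝ := (N:ℝ) - 2 with hbdef
  have hb0 : 0 < b := by rw [hbdef]; linarith
  have hbq : q + q = b := by rw [hbdef, hqdef]; ring
  set c2 : ℝ := 2*(N:ℝ) - 4 with hc2def
  have hbc2 : -b + -b = -c2 := by rw [hbdef, hc2def]; ring
  obtain ⟨S₁, hS₁top, hS₁⟩ := radial_inner N (by omega) b hb0 (by rw [hbdef]; linarith)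
  obtain ⟨S₂, hS₂top, hS₂⟩ := radial_outer N (by omega) c2 (by rw [hc2def]; linarith)
  set W : ℝ≥0∞ := 2 * S₁ + ENNReal.ofReal ((9:ℝ) ^ q) * S₂ with hWdef
  have hWtop : W ≠ ⊤ := by
    refine ENNReal.add_ne_top.2 ⟨?_, ENNReal.mul_ne_top ENNReal.ofReal_ne_top hS₂top⟩
    exact ENNReal.mul_ne_top (by norm_num) hS₁top
  have hCN0 : 0 ≤ CN := by
    rw [hCN]; apply Real.rpow_nonneg; nlinarith
  have hCpos : (0:ℝ) < CN^2 * W.toReal * 2^(N-4) + 1 := by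
    have h1 : (0:ℝ) ≤ CN^2 * W.toReal * 2^(N-4) :=
      mul_nonneg (mul_nonneg (sq_nonneg _) ENNReal.toReal_nonneg) (by positivity)
    linarith
  refine ⟨CN^2 * W.toReal * 2^(N-4) + 1, hCpos, ?_⟩
  intro x x' μ d hμ hdd hd0 hμd
  set R : ℝ := d / 2 with hRdef
  have hR : 0 < R := by rw [hRdef]; linarith
  -- basic facts
  have hμb : μ ^ b * μ ^ (-b) = 1 := by
    rw [← Real.rpow_add hμ]; simp
  have pow_id : ∀ t : ℝ, 0 ≤ t → ((μ^2 * t^2 : ℝ)) ^ (-q) = μ ^ (-b) * t ^ (-b) := by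
    intro t ht
    rw [show μ^2 * t^2 = (μ * t)^2 by ring, ← Real.rpow_natCast (μ * t) 2,
      ← Real.rpow_mul (by positivity),
      show ((2:ℕ):ℝ) * (-q) = -b by rw [hbdef, hqdef]; push_cast; ring,
      Real.mul_rpow hμ.le ht]
  have factor_bound : ∀ z x0 : EuclideanSpace ℝ (Fin N), 0 < ‖z - x0‖ →
      (1 + μ^2 * ‖z - x0‖^2) ^ (-q) ≤ μ ^ (-b) * ‖z - x0‖ ^ (-b) := by
    intro z x0 hz
    have h1 : (1 + μ^2*‖z-x0‖^2) ^ (-q) ≤ (μ^2 * ‖z-x0‖^2) ^ (-q) :=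
      Real.rpow_le_rpow_of_nonpos (by positivity) (by linarith) (by linarith)
    rwa [pow_id _ (norm_nonneg _)] at h1
  have factor_bound_const : ∀ z x0 : EuclideanSpace ℝ (Fin N), R ≤ ‖z - x0‖ →
      (1 + μ^2 * ‖z - x0‖^2) ^ (-q) ≤ μ ^ (-b) * R ^ (-b) := by
    intro z x0 hz
    have hsq : R^2 ≤ ‖z-x0‖^2 := by nlinarith [norm_nonneg (z - x0)]
    have hle : μ^2 * R^2 ≤ 1 + μ^2 * ‖z-x0‖^2 := by
      have := mul_le_mul_of_nonneg_left hsq (sq_nonneg μ)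
      linarith
    have h1 : (1 + μ^2*‖z-x0‖^2) ^ (-q) ≤ (μ^2 * R^2) ^ (-q) :=
      Real.rpow_le_rpow_of_nonpos (by positivity) hle (by linarith)
    rwa [pow_id _ hR.le] at h1
  -- rewrite the integrand
  have hfy : ∀ y, U x μ y * U x' μ y = CN^2 * μ ^ b *
      ((1 + μ^2*‖y-x‖^2) ^ (-q) * (1 + μ^2*‖y-x'‖^2) ^ (-q)) := by
    intro y
    have e : μ ^ q * μ ^ q = μ ^ b := by rw [← Real.rpow_add hμ, hbq]
    rw [hU, hU]
    linear_combination (CN^2 * ((1 + μ^2*‖y-x‖^2) ^ (-q) * (1 + μ^2*‖y-x'‖^2) ^ (-q))) * e +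
      ((CN * μ ^ q * (1 + μ^2*‖y-x‖^2) ^ (-q)) * (CN * μ ^ q) -
        CN^2 * (μ ^ q * μ ^ q)) * 0
  have hU0 : ∀ (x0 : EuclideanSpace ℝ (Fin N)) y, 0 ≤ U x0 μ y := fun x0 y => by
    rw [hU]
    exact mul_nonneg (mul_nonneg hCN0 (Real.rpow_nonneg hμ.le _))
      (Real.rpow_nonneg (by positivity) _)
  have hf0 : ∀ y, 0 ≤ U x μ y * U x' μ y := fun y => mul_nonneg (hU0 x y) (hU0 x' y)
  have hcont : Continuous fun y : EuclideanSpace ℝ (Fin N) => U x μ y * U x' μ y := by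
    have hc1 : ∀ x0 : EuclideanSpace ℝ (Fin N), Continuous fun y => U x0 μ y := by
      intro x0
      have he : (fun y => U x0 μ y) = fun y => CN * μ ^ q * (1 + μ^2*‖y-x0‖^2) ^ (-q) :=
        funext fun y => hU x0 μ y
      rw [he]
      refine continuous_const.mul (Continuous.rpow_const ?_ fun y => Or.inl (by positivity))
      fun_prop
    exact (hc1 x).mul (hc1 x')
  rw [integral_eq_lintegral_of_nonneg_ae (Filter.Eventually.of_forall hf0)
    hcont.aestronglyMeasurable]
  -- the three majorant pieces
  set g₁ : EuclideanSpace ℝ (Fin N) → ℝ :=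
    fun y => Set.indicator (ball x R) (fun y => ‖y - x‖ ^ (-b)) y with hg₁def
  set g₂ : EuclideanSpace ℝ (Fin N) → ℝ :=
    fun y => Set.indicator (ball x' R) (fun y => ‖y - x'‖ ^ (-b)) y with hg₂def
  set g₃ : EuclideanSpace ℝ (Fin N) → ℝ :=
    fun y => Set.indicator ((ball x R)ᶜ) (fun y => ‖y - x‖ ^ (-c2)) y with hg₃def
  set K₁ : ℝ := CN^2 * (μ ^ (-b) * R ^ (-b)) with hK₁def
  set K₃ : ℝ := CN^2 * (9:ℝ) ^ q * μ ^ (-b) with hK₃def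
  have hK₁0 : 0 ≤ K₁ := by
    rw [hK₁def]
    exact mul_nonneg (sq_nonneg _)
      (mul_nonneg (Real.rpow_nonneg hμ.le _) (Real.rpow_nonneg hR.le _))
  have hK₃0 : 0 ≤ K₃ := by
    rw [hK₃def]
    exact mul_nonneg (mul_nonneg (sq_nonneg _) (by positivity)) (Real.rpow_nonneg hμ.le _)
  have key1 : ∀ T : ℝ, CN^2 * μ^b * (μ^(-b) * T * (μ^(-b) * R^(-b))) = K₁ * T := by
    intro T
    rw [hK₁def]
    linear_combination (CN^2 * T * μ^(-b) * R^(-b)) * hμb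
  have key3 : ∀ T : ℝ, CN^2 * μ^b * (μ^(-b) * T * ((9:ℝ)^q * (μ^(-b) * T))) = K₃ * (T * T) := by
    intro T
    rw [hK₃def]
    linear_combination (CN^2 * (9:ℝ)^q * T * T * μ^(-b)) * hμb
  -- pointwise bound
  have hnull : volume ({x, x'} : Set (EuclideanSpace ℝ (Fin N))) = 0 :=
    (Set.toFinite _).measure_zero _
  have hae : ∀ᵐ y ∂(volume : Measure (EuclideanSpace ℝ (Fin N))),
      ENNReal.ofReal (U x μ y * U x' μ y) ≤
      ENNReal.ofReal (K₁ * g₁ y) + ENNReal.ofReal (K₁ * g₂ y) + ENNReal.ofReal (K₃ * g₃ y) := by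
    filter_upwards [compl_mem_ae_iff.2 hnull] with y hy
    have hyx : y ≠ x := fun h => hy (by simp [h])
    have hyx' : y ≠ x' := fun h => hy (by simp [h])
    have hnx : 0 < ‖y - x‖ := norm_pos_iff.2 (sub_ne_zero_of_ne hyx)
    have hnx' : 0 < ‖y - x'‖ := norm_pos_iff.2 (sub_ne_zero_of_ne hyx')
    have hd2R : d = 2 * R := by rw [hRdef]; ring
    by_cases h1 : y ∈ ball x R
    · -- first regime
      have hfar : R ≤ ‖y - x'‖ := by
        have ht := dist_triangle x y x'
        have hlt : dist y x < R := mem_ball.1 h1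
        have : dist y x' = ‖y - x'‖ := dist_eq_norm y x'
        have hxy : dist x y = dist y x := dist_comm x y
        rw [← this]
        linarith [hdd ▸ ht, hd2R ▸ (hdd ▸ ht)]
      have hbd : U x μ y * U x' μ y ≤ K₁ * g₁ y := by
        rw [hfy y, hg₁def]
        simp only [Set.indicator_of_mem h1]
        rw [← key1 (‖y - x‖ ^ (-b))]
        have hP := factor_bound y x hnx
        have hP' := factor_bound_const y x' hfar
        have h0P : (0:ℝ) ≤ (1 + μ^2*‖y-x'‖^2) ^ (-q) := Real.rpow_nonneg (by positivity) _
        have h0B : (0:ℝ) ≤ μ^(-b) * ‖y - x‖^(-b) :=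
          mul_nonneg (Real.rpow_nonneg hμ.le _) (Real.rpow_nonneg (norm_nonneg _) _)
        have hmm : (1 + μ^2*‖y-x‖^2) ^ (-q) * (1 + μ^2*‖y-x'‖^2) ^ (-q)
            ≤ μ^(-b) * ‖y - x‖^(-b) * (μ^(-b) * R^(-b)) := mul_le_mul hP hP' h0P h0B
        have hc0 : (0:ℝ) ≤ CN^2 * μ^b := mul_nonneg (sq_nonneg _) (Real.rpow_nonneg hμ.le _)
        calc CN^2 * μ ^ b * ((1 + μ^2*‖y-x‖^2) ^ (-q) * (1 + μ^2*‖y-x'‖^2) ^ (-q))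
            ≤ CN^2 * μ ^ b * (μ^(-b) * ‖y - x‖^(-b) * (μ^(-b) * R^(-b))) :=
              mul_le_mul_of_nonneg_left hmm hc0
          _ = _ := by rfl
      exact le_trans (ENNReal.ofReal_le_ofReal hbd) (le_self_add.trans le_self_add)
    by_cases h2 : y ∈ ball x' R
    · have hfar : R ≤ ‖y - x‖ := by
        have ht := dist_triangle x' y x
        have hlt : dist y x' < R := mem_ball.1 h2
        have he1 : dist y x = ‖y - x‖ := dist_eq_norm y x
        have he2 : dist x' y = dist y x' := dist_comm x' y
        have he3 : dist x' x = d := by rw [hdd, dist_comm]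
        rw [← he1]
        linarith [hd2R ▸ (he3 ▸ ht)]
      have hbd : U x μ y * U x' μ y ≤ K₁ * g₂ y := by
        rw [hfy y, hg₂def]
        simp only [Set.indicator_of_mem h2]
        have hP := factor_bound y x' hnx'
        have hP' := factor_bound_const y x hfar
        have h0P : (0:ℝ) ≤ (1 + μ^2*‖y-x'‖^2) ^ (-q) := Real.rpow_nonneg (by positivity) _
        have h0B : (0:ℝ) ≤ μ^(-b) * R^(-b) :=
          mul_nonneg (Real.rpow_nonneg hμ.le _) (Real.rpow_nonneg hR.le _)
        have hmm : (1 + μ^2*‖y-x‖^2) ^ (-q) * (1 + μ^2*‖y-x'‖^2) ^ (-q)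
            ≤ (μ^(-b) * R^(-b)) * (μ^(-b) * ‖y - x'‖^(-b)) := mul_le_mul hP' hP h0P h0B
        have hc0 : (0:ℝ) ≤ CN^2 * μ^b := mul_nonneg (sq_nonneg _) (Real.rpow_nonneg hμ.le _)
        calc CN^2 * μ ^ b * ((1 + μ^2*‖y-x‖^2) ^ (-q) * (1 + μ^2*‖y-x'‖^2) ^ (-q))
            ≤ CN^2 * μ ^ b * ((μ^(-b) * R^(-b)) * (μ^(-b) * ‖y - x'‖^(-b))) :=
              mul_le_mul_of_nonneg_left hmm hc0
          _ = K₁ * ‖y - x'‖ ^ (-b) := by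
              rw [hK₁def]; linear_combination (CN^2 * (‖y - x'‖^(-b)) * μ^(-b) * R^(-b)) * hμb
      exact le_trans (ENNReal.ofReal_le_ofReal hbd) (le_add_self.trans le_self_add)
    · -- third regime
      have hfar : R ≤ ‖y - x‖ := by
        have := h1
        rw [mem_ball, not_lt, dist_eq_norm] at this
        exact this
      have hfar' : R ≤ ‖y - x'‖ := by
        have := h2
        rw [mem_ball, not_lt, dist_eq_norm] at this
        exact this
      have h3 : ‖y - x‖ ≤ 3 * ‖y - x'‖ := by
        have htri : ‖y - x‖ ≤ ‖y - x'‖ + ‖x' - x‖ := by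
          have := norm_add_le (y - x') (x' - x)
          rwa [sub_add_sub_cancel] at this
        have hxx : ‖x' - x‖ = d := by rw [← dist_eq_norm, dist_comm, ← hdd]
        linarith [hxx ▸ htri, hd2R]
      have hsq : ‖y - x‖^2 ≤ 9 * ‖y - x'‖^2 := by
        nlinarith [norm_nonneg (y - x), norm_nonneg (y - x')]
      have hmain : (1 + μ^2*‖y - x‖^2)/9 ≤ 1 + μ^2*‖y - x'‖^2 := by
        have := mul_le_mul_of_nonneg_left hsq (sq_nonneg μ)
        linarith
      have hP' : (1 + μ^2*‖y-x'‖^2) ^ (-q) ≤ (9:ℝ)^q * (μ^(-b) * ‖y - x‖^(-b)) := by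
        have hstep : (1 + μ^2*‖y-x'‖^2) ^ (-q) ≤ ((1 + μ^2*‖y-x‖^2)/9) ^ (-q) :=
          Real.rpow_le_rpow_of_nonpos (by positivity) hmain (by linarith)
        have hdiv : ((1 + μ^2*‖y-x‖^2)/9) ^ (-q)
            = (9:ℝ)^q * (1 + μ^2*‖y-x‖^2) ^ (-q) := by
          rw [Real.div_rpow (by positivity) (by norm_num : (0:ℝ) ≤ 9),
            Real.rpow_neg (by norm_num : (0:ℝ) ≤ 9), div_eq_mul_inv, inv_inv]
          ring
        have hfb := factor_bound y x hnx
        calc (1 + μ^2*‖y-x'‖^2) ^ (-q) ≤ ((1 + μ^2*‖y-x‖^2)/9) ^ (-q) := hstep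
          _ = (9:ℝ)^q * (1 + μ^2*‖y-x‖^2) ^ (-q) := hdiv
          _ ≤ (9:ℝ)^q * (μ^(-b) * ‖y - x‖^(-b)) :=
              mul_le_mul_of_nonneg_left hfb (by positivity)
      have hbd : U x μ y * U x' μ y ≤ K₃ * g₃ y := by
        rw [hfy y, hg₃def]
        simp only [Set.indicator_of_mem (Set.mem_compl h1)]
        have hP := factor_bound y x hnx
        have h0P : (0:ℝ) ≤ (1 + μ^2*‖y-x'‖^2) ^ (-q) := Real.rpow_nonneg (by positivity) _
        have h0B : (0:ℝ) ≤ μ^(-b) * ‖y - x‖^(-b) :=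
          mul_nonneg (Real.rpow_nonneg hμ.le _) (Real.rpow_nonneg (norm_nonneg _) _)
        have hmm : (1 + μ^2*‖y-x‖^2) ^ (-q) * (1 + μ^2*‖y-x'‖^2) ^ (-q)
            ≤ (μ^(-b) * ‖y - x‖^(-b)) * ((9:ℝ)^q * (μ^(-b) * ‖y - x‖^(-b))) :=
          mul_le_mul hP hP' h0P h0B
        have hc0 : (0:ℝ) ≤ CN^2 * μ^b := mul_nonneg (sq_nonneg _) (Real.rpow_nonneg hμ.le _)
        have hTT : ‖y - x‖^(-b) * ‖y - x‖^(-b) = ‖y - x‖^(-c2) := by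
          rw [← Real.rpow_add hnx, hbc2]
        calc CN^2 * μ ^ b * ((1 + μ^2*‖y-x‖^2) ^ (-q) * (1 + μ^2*‖y-x'‖^2) ^ (-q))
            ≤ CN^2 * μ ^ b * ((μ^(-b) * ‖y - x‖^(-b)) * ((9:ℝ)^q * (μ^(-b) * ‖y - x‖^(-b)))) :=
              mul_le_mul_of_nonneg_left hmm hc0
          _ = K₃ * (‖y - x‖^(-b) * ‖y - x‖^(-b)) := key3 _
          _ = K₃ * ‖y - x‖^(-c2) := by rw [hTT]
      exact le_trans (ENNReal.ofReal_le_ofReal hbd) le_add_self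
  -- measurability of the majorant pieces
  have hmrad : ∀ (x0 : EuclideanSpace ℝ (Fin N)) (e : ℝ),
      Measurable fun y : EuclideanSpace ℝ (Fin N) => ‖y - x0‖ ^ e := by
    intro x0 e; fun_prop
  have hm1 : Measurable fun y => ENNReal.ofReal (K₁ * g₁ y) := by
    rw [hg₁def]
    exact (measurable_const.mul ((hmrad x (-b)).indicator measurableSet_ball)).ennreal_ofReal
  have hm2 : Measurable fun y => ENNReal.ofReal (K₁ * g₂ y) := by
    rw [hg₂def]
    exact (measurable_const.mul ((hmrad x' (-b)).indicator measurableSet_ball)).ennreal_ofReal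
  have hm3 : Measurable fun y => ENNReal.ofReal (K₃ * g₃ y) := by
    rw [hg₃def]
    exact (measurable_const.mul
      ((hmrad x (-c2)).indicator measurableSet_ball.compl)).ennreal_ofReal
  have hsplit : ∀ (x0 : EuclideanSpace ℝ (Fin N)) (s : Set (EuclideanSpace ℝ (Fin N))),
      MeasurableSet s → ∀ (K : ℝ), 0 ≤ K → ∀ (e : ℝ),
      (∫⁻ y, ENNReal.ofReal (K * s.indicator (fun y => ‖y - x0‖ ^ e) y))
        = ENNReal.ofReal K * ∫⁻ y in s, ENNReal.ofReal (‖y - x0‖ ^ e) := by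
    intro x0 s hs K hK e
    have h1 : ∀ y, ENNReal.ofReal (K * s.indicator (fun y => ‖y - x0‖ ^ e) y)
        = ENNReal.ofReal K * s.indicator (fun y => ENNReal.ofReal (‖y - x0‖ ^ e)) y := by
      intro y
      by_cases h : y ∈ s
      · simp [h, ENNReal.ofReal_mul hK]
      · simp [h]
    simp_rw [h1]
    rw [lintegral_const_mul' _ _ ENNReal.ofReal_ne_top, lintegral_indicator hs]
  have hbase0 : 0 ≤ CN^2 * μ^(-b) * R^((4:ℝ)-(N:ℝ)) :=
    mul_nonneg (mul_nonneg (sq_nonneg _) (Real.rpow_nonneg hμ.le _)) (Real.rpow_nonneg hR.le _)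
  have hchain : (∫⁻ y, ENNReal.ofReal (U x μ y * U x' μ y))
      ≤ ENNReal.ofReal (CN^2 * μ^(-b) * R^((4:ℝ)-(N:ℝ))) * W := by
    calc ∫⁻ y, ENNReal.ofReal (U x μ y * U x' μ y)
        ≤ ∫⁻ y, (ENNReal.ofReal (K₁ * g₁ y) + ENNReal.ofReal (K₁ * g₂ y)
            + ENNReal.ofReal (K₃ * g₃ y)) := lintegral_mono_ae hae
      _ = (∫⁻ y, ENNReal.ofReal (K₁ * g₁ y)) + (∫⁻ y, ENNReal.ofReal (K₁ * g₂ y))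
            + ∫⁻ y, ENNReal.ofReal (K₃ * g₃ y) := by
          rw [lintegral_add_right _ hm3, lintegral_add_right _ hm2]
      _ ≤ ENNReal.ofReal K₁ * (ENNReal.ofReal (R ^ ((N:ℝ)-b)) * S₁)
            + ENNReal.ofReal K₁ * (ENNReal.ofReal (R ^ ((N:ℝ)-b)) * S₁)
            + ENNReal.ofReal K₃ * (ENNReal.ofReal (R ^ ((N:ℝ)-c2)) * S₂) := by
          refine add_le_add (add_le_add ?_ ?_) ?_
          · rw [hg₁def, hsplit x (ball x R) measurableSet_ball K₁ hK₁0 (-b)]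
            exact mul_le_mul_right (hS₁ x R hR) _
          · rw [hg₂def, hsplit x' (ball x' R) measurableSet_ball K₁ hK₁0 (-b)]
            exact mul_le_mul_right (hS₁ x' R hR) _
          · rw [hg₃def, hsplit x ((ball x R)ᶜ) measurableSet_ball.compl K₃ hK₃0 (-c2)]
            exact mul_le_mul_right (hS₂ x R hR) _
      _ = ENNReal.ofReal (CN^2 * μ^(-b) * R^((4:ℝ)-(N:ℝ))) * W := by
          have hx1 : ENNReal.ofReal K₁ * (ENNReal.ofReal (R ^ ((N:ℝ)-b)) * S₁)
              = ENNReal.ofReal (CN^2 * μ^(-b) * R^((4:ℝ)-(N:ℝ))) * S₁ := by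
            rw [← mul_assoc, ← ENNReal.ofReal_mul hK₁0]
            congr 2
            rw [hK₁def]
            have hRR : R^(-b) * R^((N:ℝ)-b) = R^((4:ℝ)-(N:ℝ)) := by
              rw [← Real.rpow_add hR]; congr 1; rw [hbdef]; ring
            linear_combination (CN^2 * μ^(-b)) * hRR
          have hx3 : ENNReal.ofReal K₃ * (ENNReal.ofReal (R ^ ((N:ℝ)-c2)) * S₂)
              = ENNReal.ofReal (CN^2 * μ^(-b) * R^((4:ℝ)-(N:ℝ)))
                * (ENNReal.ofReal ((9:ℝ)^q) * S₂) := by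
            rw [← mul_assoc, ← mul_assoc, ← ENNReal.ofReal_mul hK₃0,
              ← ENNReal.ofReal_mul hbase0]
            congr 2
            rw [hK₃def]
            have hRR : R^((N:ℝ)-c2) = R^((4:ℝ)-(N:ℝ)) := by congr 1; rw [hc2def]; ring
            rw [hRR]; ring
          rw [hx1, hx3, hWdef]
          ring
  have hfin : (ENNReal.ofReal (CN^2 * μ^(-b) * R^((4:ℝ)-(N:ℝ))) * W) ≠ ⊤ :=
    ENNReal.mul_ne_top ENNReal.ofReal_ne_top hWtop
  refine le_trans (ENNReal.toReal_mono hfin hchain) ?_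
  rw [ENNReal.toReal_mul, ENNReal.toReal_ofReal hbase0]
  have hcast1 : ((N - 2 : ℕ) : ℝ) = b := by
    rw [hbdef, Nat.cast_sub (by omega : 2 ≤ N)]; norm_num
  have hcast2 : ((N - 4 : ℕ) : ℝ) = (N:ℝ) - 4 := by
    rw [Nat.cast_sub (by omega : 4 ≤ N)]; norm_num
  have ebm : μ ^ (-b) = (μ^(N-2))⁻¹ := by
    rw [Real.rpow_neg hμ.le]
    congr 1
    rw [← Real.rpow_natCast μ (N-2), hcast1]
  have eRm : R ^ ((4:ℝ)-(N:ℝ)) = ((d/2)^(N-4))⁻¹ := by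
    rw [show (4:ℝ)-(N:ℝ) = -(((N-4:ℕ)):ℝ) by rw [hcast2]; ring,
      Real.rpow_neg hR.le, Real.rpow_natCast, hRdef]
  rw [ebm, eRm, div_pow]
  have hμp : (0:ℝ) < μ^(N-2) := pow_pos hμ _
  have hdp : (0:ℝ) < d^(N-4) := pow_pos hd0 _
  have h2p : (0:ℝ) < (2:ℝ)^(N-4) := by positivity
  have heq : CN^2 * (μ^(N-2))⁻¹ * (d^(N-4)/2^(N-4))⁻¹ * W.toReal
      = (CN^2 * W.toReal * 2^(N-4)) / (μ^(N-2) * d^(N-4)) := by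
    field_simp
  rw [heq, div_le_div_iff_of_pos_right (mul_pos hμp hdp)]
  linarith
end

section
/- Let N ≥ 3, x, x' ∈ ℝ^N with d = |x-x'| ≥ 2, μ ≥ 1, and let α ∈ [1, N-2]. Then for every y ∈ ℝ^N with |y - x'| ≥ d/2, U_{x',μ}(y) ≤ C μ^{(N-2)/2} (1 + μ|y-x|)^{-(N-2-α)} · (μ d)^{-α} · 2^{N-2} for a constant C depending only on N. -/
open Real

/-- Pointwise bound on a distant bubble (Lemma B.3 type estimate). -/
theorem stmt_16 (N : ℕ) (hN : 3 ≤ N)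
    (CN : ℝ) (hCN : CN = ((N:ℝ)*((N:ℝ)-2)) ^ (((N:ℝ)-2)/4))
    (U : EuclideanSpace ℝ (Fin N) → ℝ → EuclideanSpace ℝ (Fin N) → ℝ)
    (hU : ∀ x μ y, U x μ y = CN * μ ^ (((N:ℝ)-2)/2) * (1 + μ^2 * ‖y - x‖^2) ^ (-(((N:ℝ)-2)/2))) :
    ∃ C > 0, ∀ (x x' : EuclideanSpace ℝ (Fin N)) (d μ α : ℝ),
      d = dist x x' → 2 ≤ d → 1 ≤ μ → α ∈ Set.Icc (1:ℝ) ((N:ℝ)-2) →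
      ∀ y : EuclideanSpace ℝ (Fin N), d/2 ≤ ‖y - x'‖ →
        U x' μ y ≤ C * μ ^ (((N:ℝ)-2)/2) * (1 + μ*‖y - x‖) ^ (-(((N:ℝ)-2-α)))
          * (μ*d) ^ (-α) * (2:ℝ)^(N-2) := by
  set n : ℝ := (N:ℝ) - 2 with hn_def
  have hNR : (3:ℝ) ≤ (N:ℝ) := by exact_mod_cast hN
  have hn1 : (1:ℝ) ≤ n := by simp only [hn_def]; linarith
  have hn0 : (0:ℝ) < n := by linarith
  have hCNpos : 0 < CN := by
    rw [hCN]
    exact Real.rpow_pos_of_pos (by nlinarith) _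
  refine ⟨CN * 2 ^ (n/2) * 2 ^ n * 3 ^ n, by positivity, ?_⟩
  intro x x' d μ α hd hd2 hμ hα y hy
  obtain ⟨hα1, hα2⟩ := hα
  have hμ0 : (0:ℝ) < μ := by linarith
  have hr0 : (0:ℝ) ≤ ‖y - x'‖ := norm_nonneg _
  have hs0 : (0:ℝ) ≤ ‖y - x‖ := norm_nonneg _
  set r : ℝ := ‖y - x'‖
  set s : ℝ := ‖y - x‖
  have hrd : d / 2 ≤ r := hy
  have hr1 : (1:ℝ) ≤ r := by linarith
  -- s ≤ 3 r
  have hsr : s ≤ 3 * r := by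
    have hd' : ‖x' - x‖ = d := by rw [hd, dist_eq_norm, norm_sub_rev]
    have h1 : s ≤ r + d := by
      have h := norm_sub_le_norm_sub_add_norm_sub y x' x
      rw [hd'] at h; exact h
    linarith
  have hμd : (0:ℝ) < μ * d := by nlinarith
  have hA : (1 + μ^2 * r^2) ^ (-(n/2)) ≤ 2 ^ (n/2) * (1 + μ * r) ^ (-n) := by
    have hbase : ((1 + μ*r)^2) / 2 ≤ 1 + μ^2 * r^2 := by nlinarith [sq_nonneg (1 - μ*r)]
    have hpos : (0:ℝ) < ((1 + μ*r)^2) / 2 := by positivity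
    have h1 := Real.rpow_le_rpow_of_nonpos hpos hbase (by linarith : -(n/2) ≤ 0)
    calc (1 + μ^2 * r^2) ^ (-(n/2)) ≤ (((1 + μ*r)^2)/2) ^ (-(n/2)) := h1
      _ = 2 ^ (n/2) * (1 + μ * r) ^ (-n) := by
          rw [Real.div_rpow (by positivity) (by norm_num),
            ← Real.rpow_natCast (1 + μ*r) 2, ← Real.rpow_mul (by positivity),
            Real.rpow_neg (by norm_num : (0:ℝ) ≤ 2), div_inv_eq_mul,
            show ((2:ℕ):ℝ) * -(n/2) = -n by push_cast; ring]
          ring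
  have hsplit : (1 + μ * r) ^ (-n) = (1 + μ*r) ^ (-(n-α)) * (1 + μ*r) ^ (-α) := by
    rw [← Real.rpow_add (by positivity)]; ring_nf
  have hB : (1 + μ*r) ^ (-(n-α)) ≤ 3 ^ n * (1 + μ*s) ^ (-(n-α)) := by
    have hb : (1 + μ*s) / 3 ≤ 1 + μ*r := by nlinarith
    have h1 := Real.rpow_le_rpow_of_nonpos (by positivity : (0:ℝ) < (1 + μ*s)/3) hb
      (by linarith : -(n-α) ≤ 0)
    calc (1 + μ*r) ^ (-(n-α)) ≤ ((1 + μ*s)/3) ^ (-(n-α)) := h1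
      _ = 3 ^ (n-α) * (1 + μ*s) ^ (-(n-α)) := by
          rw [Real.div_rpow (by positivity) (by norm_num),
            Real.rpow_neg (by norm_num : (0:ℝ) ≤ 3), div_inv_eq_mul]
          ring
      _ ≤ 3 ^ n * (1 + μ*s) ^ (-(n-α)) := by
          have h3 : (3:ℝ) ^ (n-α) ≤ 3 ^ n :=
            Real.rpow_le_rpow_of_exponent_le (by norm_num) (by linarith)
          exact mul_le_mul_of_nonneg_right h3 (by positivity)
  have hD : (1 + μ*r) ^ (-α) ≤ 2 ^ n * (μ*d) ^ (-α) := by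
    have hb : (μ*d)/2 ≤ 1 + μ*r := by nlinarith
    have h1 := Real.rpow_le_rpow_of_nonpos (by positivity : (0:ℝ) < (μ*d)/2) hb
      (by linarith : -α ≤ 0)
    calc (1 + μ*r) ^ (-α) ≤ ((μ*d)/2) ^ (-α) := h1
      _ = 2 ^ α * (μ*d) ^ (-α) := by
          rw [Real.div_rpow (by positivity) (by norm_num),
            Real.rpow_neg (by norm_num : (0:ℝ) ≤ 2), div_inv_eq_mul]
          ring
      _ ≤ 2 ^ n * (μ*d) ^ (-α) := by
          have h2 : (2:ℝ) ^ α ≤ 2 ^ n :=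
            Real.rpow_le_rpow_of_exponent_le (by norm_num) (by linarith)
          exact mul_le_mul_of_nonneg_right h2 (by positivity)
  have hkey : (1 + μ^2 * r^2) ^ (-(n/2)) ≤
      2 ^ (n/2) * 2 ^ n * 3 ^ n * ((1 + μ*s) ^ (-(n-α)) * (μ*d) ^ (-α)) := by
    calc (1 + μ^2 * r^2) ^ (-(n/2)) ≤ 2 ^ (n/2) * (1 + μ * r) ^ (-n) := hA
      _ = 2 ^ (n/2) * ((1 + μ*r) ^ (-(n-α)) * (1 + μ*r) ^ (-α)) := by rw [hsplit]
      _ ≤ 2 ^ (n/2) * ((3 ^ n * (1 + μ*s) ^ (-(n-α))) * (2 ^ n * (μ*d) ^ (-α))) := by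
          refine mul_le_mul_of_nonneg_left ?_ (by positivity)
          exact mul_le_mul hB hD (by positivity) (by positivity)
      _ = 2 ^ (n/2) * 2 ^ n * 3 ^ n * ((1 + μ*s) ^ (-(n-α)) * (μ*d) ^ (-α)) := by ring
  rw [hU]
  have h2N : (1:ℝ) ≤ (2:ℝ)^(N-2) := one_le_pow₀ (by norm_num)
  have main : CN * μ ^ (n/2) * (1 + μ^2 * r^2) ^ (-(n/2)) ≤
      CN * 2 ^ (n/2) * 2 ^ n * 3 ^ n * μ ^ (n/2) * (1 + μ*s) ^ (-(n-α)) * (μ*d) ^ (-α) := by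
    have h := mul_le_mul_of_nonneg_left hkey
      (show (0:ℝ) ≤ CN * μ ^ (n/2) by positivity)
    calc CN * μ ^ (n/2) * (1 + μ^2 * r^2) ^ (-(n/2))
        ≤ CN * μ ^ (n/2) * (2 ^ (n/2) * 2 ^ n * 3 ^ n *
            ((1 + μ*s) ^ (-(n-α)) * (μ*d) ^ (-α))) := h
      _ = CN * 2 ^ (n/2) * 2 ^ n * 3 ^ n * μ ^ (n/2) * (1 + μ*s) ^ (-(n-α)) * (μ*d) ^ (-α) := by
          ring
  calc CN * μ ^ (n/2) * (1 + μ^2 * r^2) ^ (-(n/2))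
      ≤ CN * 2 ^ (n/2) * 2 ^ n * 3 ^ n * μ ^ (n/2) * (1 + μ*s) ^ (-(n-α)) * (μ*d) ^ (-α) := main
    _ ≤ CN * 2 ^ (n/2) * 2 ^ n * 3 ^ n * μ ^ (n/2) * (1 + μ*s) ^ (-(n-α)) * (μ*d) ^ (-α)
        * (2:ℝ)^(N-2) := le_mul_of_one_le_right (by positivity) h2N
end

section
/- Let N ≥ 5. Then as k → ∞ with h = h(k) ∈ (0,1), h → 0 and hk → ∞, the sum T_k = Σ_{j=1}^{k} ((1-h²)sin²((j-1)π/k) + h²)^{-(N-2)/2} satisfies T_k · h^{N-3} / k → (2/π) ∫_0^∞ (1+z²)^{-(N-2)/2} dz. -/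
/-!
Write `a = h k`, `p = (N - 2) / 2` and `K(x) = ((1 - a²) sin² x + a²)^(-p)`, so that the sum
samples `K` at `x = iπ/k`. Since `K ≤ a^(-2p)` and `K` is monotone on each half of `[0, π]`,
the Riemann sum differs from `(k/π) ∫₀^π K` by at most `2 a^(-2p)`, which after scaling by
`a^(2p-1)/k` is `2/(a k) → 0`. The substitution `x = arctan (a z)` gives
`∫₀^π K = 2 a^(1-2p) ∫₀^∞ (1 + z²)^(-p) (1 + a²z²)^(p-1) dz`; for `p ≥ 1` this integrand is
dominated by `(1 + z²)⁻¹`, so dominated convergence lets `a → 0`.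
-/

open Real Filter MeasureTheory Set Topology

lemma Finset.sum_Ico_comp_add_one {f : ℝ → ℝ} {a b : ℕ} (hab : a ≤ b) :
    ∑ i ∈ Finset.Ico a b, f ↑(i + 1) = ∑ i ∈ Finset.Ico a b, f i - f a + f b := by
  have htelescope := Finset.sum_Ico_sub (fun i : ℕ => f i) hab
  rw [Finset.sum_sub_distrib] at htelescope
  linarith

theorem AntitoneOn.sum_Ico_sub_integral_le {f : ℝ → ℝ} {a b : ℕ} (hab : a ≤ b)
    (hf : AntitoneOn f (Icc a b)) :
    (∑ i ∈ Finset.Ico a b, f i) - ∫ x in a..b, f x ≤ f a - f b := by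
  linarith [hf.sum_le_integral_Ico hab, Finset.sum_Ico_comp_add_one (f := f) hab]

theorem MonotoneOn.integral_sub_sum_Ico_le {f : ℝ → ℝ} {a b : ℕ} (hab : a ≤ b)
    (hf : MonotoneOn f (Icc a b)) :
    (∫ x in a..b, f x) - ∑ i ∈ Finset.Ico a b, f i ≤ f b - f a := by
  linarith [hf.integral_le_sum_Ico hab, Finset.sum_Ico_comp_add_one (f := f) hab]

theorem abs_sum_range_sub_integral_le_of_antitoneOn_of_monotoneOn {f : ℝ → ℝ} {B : ℝ}
    {m n : ℕ} (hmn : m + 1 ≤ n) (hf : Continuous f) (hf0 : ∀ x, 0 ≤ f x)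
    (hfB : ∀ x, f x ≤ B)
    (hanti : AntitoneOn f (Icc 0 m)) (hmono : MonotoneOn f (Icc ↑(m + 1) n)) :
    |(∑ i ∈ Finset.range n, f i) - ∫ x in (0:ℝ)..n, f x| ≤ 2 * B := by
  have hint : ∀ x y : ℝ, IntervalIntegrable f volume x y := hf.intervalIntegrable
  have hsum : ∑ i ∈ Finset.range n, f i
      = ∑ i ∈ Finset.range m, f i + f m + ∑ i ∈ Finset.Ico (m + 1) n, f i := by
    rw [← Finset.sum_range_add_sum_Ico _ (by omega : m ≤ n),
      Finset.sum_eq_sum_Ico_succ_bot (by omega : m < n), add_assoc]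
  have hint_split : ∫ x in (0:ℝ)..n, f x
      = (∫ x in (0:ℝ)..m, f x) + (∫ x in (m:ℝ)..↑(m + 1), f x)
        + ∫ x in ↑(m + 1)..(n:ℝ), f x := by
    rw [intervalIntegral.integral_add_adjacent_intervals (hint _ _) (hint _ _),
      intervalIntegral.integral_add_adjacent_intervals (hint _ _) (hint _ _)]
  have hstep : (m:ℝ) ≤ ↑(m + 1) := by push_cast; linarith
  have hmid_nonneg : 0 ≤ ∫ x in (m:ℝ)..↑(m + 1), f x :=
    intervalIntegral.integral_nonneg hstep fun x _ => hf0 x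
  have hmid_le : ∫ x in (m:ℝ)..↑(m + 1), f x ≤ B := by
    calc ∫ x in (m:ℝ)..↑(m + 1), f x ≤ ∫ _ in (m:ℝ)..↑(m + 1), B :=
          intervalIntegral.integral_mono_on hstep (hint _ _) intervalIntegrable_const
            fun x _ => hfB x
      _ = B := by simp
  have hanti' : AntitoneOn f (Icc ↑(0:ℕ) m) := by simpa using hanti
  have hleft := hanti'.sum_Ico_sub_integral_le (Nat.zero_le m)
  have hleft' := hanti'.integral_le_sum_Ico (Nat.zero_le m)
  have hright := hmono.integral_sub_sum_Ico_le hmn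
  have hright' := hmono.sum_le_integral_Ico hmn
  simp only [Nat.Ico_zero_eq_range, Nat.cast_zero] at hleft hleft'
  rw [abs_le, hsum, hint_split]
  constructor <;> linarith [hf0 m, hfB 0, hf0 n, hfB n, hf0 ↑(m + 1), hfB ↑(m + 1)]

lemma integral_Ioo_zero_pi_div_two_eq_integral_comp_arctan {a : ℝ} (ha : 0 < a)
    (g : ℝ → ℝ) :
    ∫ x in Ioo 0 (π / 2), g x = ∫ z in Ioi 0, a / (1 + (a * z) ^ 2) * g (arctan (a * z)) := by
  have hmono : StrictMono fun z : ℝ => arctan (a * z) :=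
    arctan_strictMono.comp fun _ _ h => mul_lt_mul_of_pos_left h ha
  have himage : (fun z => arctan (a * z)) '' Ioi 0 = Ioo 0 (π / 2) := by
    ext y
    constructor
    · rintro ⟨z, hz, rfl⟩
      exact ⟨by simpa using hmono hz, arctan_lt_pi_div_two _⟩
    · intro hy
      refine ⟨tan y / a, div_pos (tan_pos_of_pos_of_lt_pi_div_two hy.1 hy.2) ha, ?_⟩
      simp only [mul_div_cancel₀ _ ha.ne']
      exact arctan_tan (by linarith [hy.1, pi_pos]) hy.2
  have hderiv (z : ℝ) : HasDerivAt (fun z => arctan (a * z)) (a / (1 + (a * z) ^ 2)) z := by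
    convert ((hasDerivAt_id' z).const_mul a).arctan using 1
    ring
  rw [← himage, integral_image_eq_integral_abs_deriv_smul measurableSet_Ioi
    (fun z _ => (hderiv z).hasDerivWithinAt) hmono.injective.injOn]
  congr 1 with z
  rw [smul_eq_mul, abs_of_pos (by positivity)]

lemma continuousAt_integral_rpow_mul_rpow {p : ℝ} (hp : 1 ≤ p) :
    ContinuousAt
      (fun t : ℝ => ∫ z in Ioi (0 : ℝ), (1 + z ^ 2) ^ (-p) * (1 + t ^ 2 * z ^ 2) ^ (p - 1))
      0 := by
  have hbound : ∀ t ∈ Icc (-1 : ℝ) 1, ∀ z : ℝ,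
      ‖(1 + z ^ 2) ^ (-p) * (1 + t ^ 2 * z ^ 2) ^ (p - 1)‖ ≤ (1 + z ^ 2)⁻¹ := by
    intro t ht z
    have hz : 0 < 1 + z ^ 2 := by positivity
    have ht2 : t ^ 2 ≤ 1 := by nlinarith [ht.1, ht.2]
    rw [norm_of_nonneg (by positivity)]
    calc (1 + z ^ 2) ^ (-p) * (1 + t ^ 2 * z ^ 2) ^ (p - 1)
        ≤ (1 + z ^ 2) ^ (-p) * (1 + z ^ 2) ^ (p - 1) := by
          gcongr (1 + z ^ 2) ^ (-p) * ?_
          exact rpow_le_rpow (by positivity) (by nlinarith [sq_nonneg z]) (by linarith)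
      _ = (1 + z ^ 2)⁻¹ := by rw [← rpow_add hz, show -p + (p - 1) = -1 by ring, rpow_neg_one]
  have hcont (t : ℝ) :
      Continuous fun z : ℝ => (1 + z ^ 2) ^ (-p) * (1 + t ^ 2 * z ^ 2) ^ (p - 1) :=
    .mul (.rpow_const (by fun_prop) fun z => Or.inl (by positivity))
      (.rpow_const (by fun_prop) fun z => Or.inl (by positivity))
  refine continuousAt_of_dominated (Eventually.of_forall fun t => (hcont t).aestronglyMeasurable)
    ?_ integrable_inv_one_add_sq.restrict (Eventually.of_forall fun z => ?_)
  · filter_upwards [Icc_mem_nhds (by norm_num : (-1 : ℝ) < 0) one_pos] with t ht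
    exact Eventually.of_forall (hbound t ht)
  · have hcont_t : Continuous fun t : ℝ => (1 + t ^ 2 * z ^ 2) ^ (p - 1) :=
      .rpow_const (by fun_prop) fun t => Or.inl (by positivity)
    exact hcont_t.continuousAt.const_mul _

noncomputable def sinKernel (a p x : ℝ) : ℝ := ((1 - a ^ 2) * sin x ^ 2 + a ^ 2) ^ (-p)

section sinKernel

variable {a p : ℝ}

lemma sinKernel_base_pos (ha : a ≠ 0) (x : ℝ) : 0 < (1 - a ^ 2) * sin x ^ 2 + a ^ 2 := by
  have hsc := sin_sq_add_cos_sq x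
  have ha2 : 0 < a ^ 2 := by positivity
  nlinarith [sq_nonneg (sin x), sq_nonneg (cos x), mul_pos ha2 ha2]

lemma sinKernel_base_ge (ha : a ^ 2 ≤ 1) (x : ℝ) :
    a ^ 2 ≤ (1 - a ^ 2) * sin x ^ 2 + a ^ 2 := by
  nlinarith [sq_nonneg (sin x)]

lemma continuous_sinKernel (ha : a ≠ 0) (p : ℝ) : Continuous (sinKernel a p) :=
  (by fun_prop : Continuous fun x => (1 - a ^ 2) * sin x ^ 2 + a ^ 2).rpow_const
    fun x => Or.inl (sinKernel_base_pos ha x).ne'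

lemma sinKernel_nonneg (ha : a ≠ 0) (p x : ℝ) : 0 ≤ sinKernel a p x :=
  rpow_nonneg (sinKernel_base_pos ha x).le _

lemma sinKernel_le (ha : a ∈ Ioo 0 1) (hp : 0 ≤ p) (x : ℝ) :
    sinKernel a p x ≤ (a ^ 2) ^ (-p) :=
  rpow_le_rpow_of_nonpos (pow_pos ha.1 2) (sinKernel_base_ge (by nlinarith [ha.1, ha.2]) x)
    (by linarith)

lemma sinKernel_pi_sub (a p x : ℝ) : sinKernel a p (π - x) = sinKernel a p x := by
  simp only [sinKernel, sin_pi_sub]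

lemma antitoneOn_sinKernel (ha : a ∈ Ioo 0 1) (hp : 0 ≤ p) :
    AntitoneOn (sinKernel a p) (Icc 0 (π / 2)) := by
  intro x hx y hy hxy
  have hsin : sin x ≤ sin y :=
    sin_le_sin_of_le_of_le_pi_div_two (by linarith [hx.1, pi_pos]) hy.2 hxy
  have hsin0 : 0 ≤ sin x := sin_nonneg_of_nonneg_of_le_pi hx.1 (by linarith [hx.2, pi_pos])
  have hsq : sin x ^ 2 ≤ sin y ^ 2 := pow_le_pow_left₀ hsin0 hsin 2
  have ha2 : 0 ≤ 1 - a ^ 2 := by nlinarith [ha.1, ha.2]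
  exact rpow_le_rpow_of_nonpos (sinKernel_base_pos ha.1.ne' x)
    (by nlinarith [mul_le_mul_of_nonneg_left hsq ha2]) (by linarith)

lemma monotoneOn_sinKernel (ha : a ∈ Ioo 0 1) (hp : 0 ≤ p) :
    MonotoneOn (sinKernel a p) (Icc (π / 2) π) := by
  intro x hx y hy hxy
  rw [← sinKernel_pi_sub a p x, ← sinKernel_pi_sub a p y]
  exact antitoneOn_sinKernel ha hp ⟨by linarith [hy.2], by linarith [hy.1]⟩
    ⟨by linarith [hx.2], by linarith [hx.1]⟩ (by linarith)

lemma abs_sum_sinKernel_sub_integral_le (ha : a ∈ Ioo 0 1) (hp : 0 ≤ p) {k : ℕ}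
    (hk : k ≠ 0) :
    |(∑ i ∈ Finset.range k, sinKernel a p (i * (π / k)))
        - k / π * ∫ x in 0..π, sinKernel a p x| ≤ 2 * (a ^ 2) ^ (-p) := by
  have hk0 : (0 : ℝ) < k := by positivity
  have hstep : 0 ≤ π / k := by positivity
  have hscale : MonotoneOn (fun u : ℝ => u * (π / k)) univ := fun _ _ _ _ huv =>
    mul_le_mul_of_nonneg_right huv hstep
  have hint : ∫ u in (0:ℝ)..k, sinKernel a p (u * (π / k))
      = k / π * ∫ x in 0..π, sinKernel a p x := by
    rw [intervalIntegral.integral_comp_mul_right _ (by positivity), zero_mul,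
      mul_div_cancel₀ _ hk0.ne', smul_eq_mul, inv_div]
  rw [← hint]
  refine abs_sum_range_sub_integral_le_of_antitoneOn_of_monotoneOn
    (f := fun u => sinKernel a p (u * (π / k))) (m := k / 2) (by omega)
    ((continuous_sinKernel ha.1.ne' p).comp (by fun_prop)) (fun _ => sinKernel_nonneg ha.1.ne' _ _)
    (fun _ => sinKernel_le ha hp _) ?_ ?_
  · have hhalf : ((k / 2 : ℕ) : ℝ) ≤ k / 2 := by
      rw [le_div_iff₀ two_pos]; exact_mod_cast Nat.div_mul_le_self k 2
    refine (antitoneOn_sinKernel ha hp).comp_MonotoneOn (hscale.mono (subset_univ _))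
      fun u hu => ⟨mul_nonneg hu.1 hstep, ?_⟩
    calc u * (π / k) ≤ (k / 2) * (π / k) := mul_le_mul_of_nonneg_right (hu.2.trans hhalf) hstep
      _ = π / 2 := by field_simp
  · have hhalf : (k / 2 : ℝ) ≤ ((k / 2 + 1 : ℕ) : ℝ) := by
      rw [div_le_iff₀ two_pos]; exact_mod_cast (by omega : k ≤ (k / 2 + 1) * 2)
    refine (monotoneOn_sinKernel ha hp).comp (hscale.mono (subset_univ _)) fun u hu => ⟨?_, ?_⟩
    · calc π / 2 = (k / 2) * (π / k) := by field_simp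
        _ ≤ u * (π / k) := mul_le_mul_of_nonneg_right (hhalf.trans hu.1) hstep
    · calc u * (π / k) ≤ k * (π / k) := mul_le_mul_of_nonneg_right hu.2 hstep
        _ = π := by field_simp

lemma sinKernel_arctan_mul (ha : 0 < a) (p z : ℝ) :
    a / (1 + (a * z) ^ 2) * sinKernel a p (arctan (a * z))
      = a ^ (1 - 2 * p) * ((1 + z ^ 2) ^ (-p) * (1 + a ^ 2 * z ^ 2) ^ (p - 1)) := by
  have hz : 0 < 1 + z ^ 2 := by positivity
  have haz : 0 < 1 + a ^ 2 * z ^ 2 := by positivity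
  have hsin : sin (arctan (a * z)) ^ 2 = a ^ 2 * z ^ 2 / (1 + a ^ 2 * z ^ 2) := by
    rw [sin_arctan, div_pow, sq_sqrt (by positivity)]
    ring
  have hbase : (1 - a ^ 2) * (a ^ 2 * z ^ 2 / (1 + a ^ 2 * z ^ 2)) + a ^ 2
      = a ^ 2 * ((1 + z ^ 2) / (1 + a ^ 2 * z ^ 2)) := by
    field_simp
    ring
  have hsq : (a ^ 2) ^ (-p) = (a ^ (2 * p))⁻¹ := by
    rw [← rpow_natCast, ← rpow_mul ha.le, ← rpow_neg ha.le]
    push_cast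
    ring_nf
  rw [sinKernel, hsin, hbase, mul_rpow (by positivity) (by positivity), hsq,
    div_rpow hz.le haz.le, rpow_neg haz.le, rpow_sub_one haz.ne', rpow_sub ha, rpow_one]
  field_simp

lemma integral_sinKernel_eq (ha : 0 < a) (p : ℝ) :
    ∫ x in 0..π, sinKernel a p x
      = 2 * a ^ (1 - 2 * p) *
          ∫ z in Ioi 0, (1 + z ^ 2) ^ (-p) * (1 + a ^ 2 * z ^ 2) ^ (p - 1) := by
  have hint := (continuous_sinKernel ha.ne' p).intervalIntegrable (μ := volume)
  have hreflect : ∫ x in π / 2..π, sinKernel a p x = ∫ x in 0..π / 2, sinKernel a p x := by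
    simpa only [sinKernel_pi_sub, sub_zero, sub_half] using
      (intervalIntegral.integral_comp_sub_left (sinKernel a p) π (a := 0) (b := π / 2)).symm
  rw [← intervalIntegral.integral_add_adjacent_intervals (hint 0 (π / 2)) (hint (π / 2) π),
    hreflect, intervalIntegral.integral_of_le (by positivity), integral_Ioc_eq_integral_Ioo,
    integral_Ioo_zero_pi_div_two_eq_integral_comp_arctan ha]
  simp only [sinKernel_arctan_mul ha, integral_const_mul]
  ring

lemma abs_sum_sinKernel_mul_rpow_sub_le (ha : a ∈ Ioo 0 1) (hp : 0 ≤ p) {k : ℕ}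
    (hk : k ≠ 0) :
    |(∑ i ∈ Finset.range k, sinKernel a p (i * (π / k))) * a ^ (2 * p - 1) / k
        - 2 / π * ∫ z in Ioi (0 : ℝ), (1 + z ^ 2) ^ (-p) * (1 + a ^ 2 * z ^ 2) ^ (p - 1)|
      ≤ 2 / (a * k) := by
  have ha0 := ha.1
  have hk0 : (0 : ℝ) < k := by positivity
  have hbound := abs_sum_sinKernel_sub_integral_le ha hp hk
  rw [integral_sinKernel_eq ha0] at hbound
  generalize ∫ z in Ioi (0 : ℝ), (1 + z ^ 2) ^ (-p) * (1 + a ^ 2 * z ^ 2) ^ (p - 1) = J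
    at hbound ⊢
  generalize ∑ i ∈ Finset.range k, sinKernel a p (i * (π / k)) = S at hbound ⊢
  have hcancel : a ^ (1 - 2 * p) * a ^ (2 * p - 1) = 1 := by
    rw [← rpow_add ha0, show 1 - 2 * p + (2 * p - 1) = 0 by ring, rpow_zero]
  have hsq : (a ^ 2) ^ (-p) * a ^ (2 * p - 1) = a⁻¹ := by
    rw [← rpow_natCast, ← rpow_mul ha0.le, ← rpow_add ha0, ← rpow_neg_one]
    congr 1
    push_cast
    ring
  have hscaled : k / π * (2 * a ^ (1 - 2 * p) * J) * (a ^ (2 * p - 1) / k) = 2 / π * J := by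
    rw [show k / π * (2 * a ^ (1 - 2 * p) * J) * (a ^ (2 * p - 1) / k)
        = 2 / π * J * (a ^ (1 - 2 * p) * a ^ (2 * p - 1)) * (k / k) by ring,
      hcancel, div_self hk0.ne', mul_one, mul_one]
  rw [← hscaled, mul_div_assoc, ← sub_mul, abs_mul,
    abs_of_pos (a := a ^ (2 * p - 1) / k) (by positivity)]
  calc |S - k / π * (2 * a ^ (1 - 2 * p) * J)| * (a ^ (2 * p - 1) / k)
      ≤ 2 * (a ^ 2) ^ (-p) * (a ^ (2 * p - 1) / k) :=
        mul_le_mul_of_nonneg_right hbound (by positivity)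
    _ = 2 / (a * k) := by
        rw [← mul_div_assoc, mul_assoc, hsq]
        field_simp

end sinKernel

theorem tendsto_sum_sinKernel_mul_rpow {p : ℝ} (hp : 1 ≤ p) {a : ℕ → ℝ}
    (ha : ∀ k, a k ∈ Ioo 0 1) (ha0 : Tendsto a atTop (𝓝 0))
    (hak : Tendsto (fun k => a k * k) atTop atTop) :
    Tendsto (fun k : ℕ => (∑ i ∈ Finset.range k, sinKernel (a k) p (i * (π / k)))
        * a k ^ (2 * p - 1) / k)
      atTop (𝓝 (2 / π * ∫ z in Ioi (0 : ℝ), (1 + z ^ 2) ^ (-p))) := by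
  have hmain : Tendsto (fun k => 2 / π *
      ∫ z in Ioi (0 : ℝ), (1 + z ^ 2) ^ (-p) * (1 + a k ^ 2 * z ^ 2) ^ (p - 1))
      atTop (𝓝 (2 / π * ∫ z in Ioi (0 : ℝ), (1 + z ^ 2) ^ (-p))) := by
    simpa using ((continuousAt_integral_rpow_mul_rpow hp).tendsto.comp ha0).const_mul (2 / π)
  have herror : Tendsto (fun k => 2 / (a k * k)) atTop (𝓝 0) := by
    simpa [div_eq_mul_inv] using hak.inv_tendsto_atTop.const_mul 2
  have hdiff := squeeze_zero_norm' (eventually_atTop.2 ⟨1, fun k hk =>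
    (norm_eq_abs _).trans_le
      (abs_sum_sinKernel_mul_rpow_sub_le (ha k) (by linarith) (Nat.one_le_iff_ne_zero.1 hk))⟩)
    herror
  simpa using hmain.add hdiff

/-- Asymptotics of the top–bottom interaction sum: `T_k h^{N-3}/k → (2/π)∫_0^∞(1+z²)^{-(N-2)/2}dz`. -/
theorem stmt_17 (N : ℕ) (hN : 5 ≤ N) (h : ℕ → ℝ)
    (hmem : ∀ k, h k ∈ Set.Ioo (0:ℝ) 1)
    (hto0 : Filter.Tendsto h Filter.atTop (nhds 0))
    (hkinf : Filter.Tendsto (fun k : ℕ => h k * k) Filter.atTop Filter.atTop) :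
    Filter.Tendsto
      (fun k : ℕ =>
        (∑ j ∈ Finset.Icc 1 k,
            ((1-(h k)^2) * Real.sin (((j:ℝ)-1)*Real.pi/k)^2 + (h k)^2) ^ (-(((N:ℝ)-2)/2)))
          * (h k)^(N-3) / (k:ℝ))
      Filter.atTop
      (nhds ((2/Real.pi) * ∫ z in Set.Ioi (0:ℝ), (1+z^2) ^ (-(((N:ℝ)-2)/2)))) := by
  have hN' : (5 : ℝ) ≤ N := by exact_mod_cast hN
  refine (tendsto_sum_sinKernel_mul_rpow (by linarith) hmem hto0 hkinf).congr fun k => ?_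
  have hsum : ∑ i ∈ Finset.range k, sinKernel (h k) ((N - 2) / 2) (i * (π / k))
      = ∑ j ∈ Finset.Icc 1 k,
          ((1 - h k ^ 2) * sin ((j - 1) * π / k) ^ 2 + h k ^ 2) ^ (-(((N : ℝ) - 2) / 2)) := by
    rw [← Finset.Ico_add_one_right_eq_Icc, Finset.sum_Ico_eq_sum_range, Nat.add_sub_cancel]
    refine Finset.sum_congr rfl fun i _ => ?_
    simp only [sinKernel]
    push_cast
    ring_nf
  have hpow : h k ^ (2 * (((N : ℝ) - 2) / 2) - 1) = h k ^ (N - 3) := by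
    rw [← rpow_natCast, Nat.cast_sub (by omega)]
    push_cast
    ring_nf
  rw [hsum, hpow]
end
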